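/- arXiv:2111.15287 — 9 statements merged into one kernel-verified Lean document; each statement's English description precedes it below -/
import Mathlib

section
/- For every real number x, the set of primes p such that every prime factor of p² − 1 is at most x is finite and has cardinality at most 3·7^{1+2π(x)}. -/
/-!
Write `p ^ 2 - 1 = D b ^ 2` with `D > 1` squarefree. Then `(p, b)` is a power `ε ^ n` of the
fundamental solution `ε` of `X ^ 2 - D Y ^ 2 = 1`, and `p` is determined by `D` and `n`.
`D` is determined by its prime factors, all at most `x`. When `n > 2`, `n` is determined by the set
of primes dividing `b = y (n)`. If `n` and `n'` have the same such set, every one of these primes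
also divides `y (g)`, where `g = gcd n n'`. A lifting-the-exponent argument then gives
`y (n) ∣ (n / g) y (g)`, and since `y` at least doubles at each step this forces `n = g`.
So a prime `p` is fixed by two subsets of the primes `≤ x` (or by one subset and `n ≤ 2`).
-/

theorem dvd_of_forall_prime_dvd_of_not_sq_dvd {α : Type*} [CommMonoidWithZero α]
    [UniqueFactorizationMonoid α] {r z : α} (hr : Prime r) (hsq : ¬r ^ 2 ∣ z)
    (h : ∀ q, Prime q → q ∣ z → q ∣ r) : z ∣ r := by
  have hr_dvd : ∀ w, w ∣ z → w ≠ 0 → ¬IsUnit w → r ∣ w := fun w hwz hw0 hw => by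
    obtain ⟨q, hq, hqw⟩ := WfDvdMonoid.exists_irreducible_factor hw hw0
    have hq := UniqueFactorizationMonoid.irreducible_iff_prime.mp hq
    exact ((hq.associated_of_dvd hr (h q hq (hqw.trans hwz))).symm.dvd).trans hqw
  have hz0 : z ≠ 0 := by rintro rfl; exact hsq (dvd_zero _)
  by_cases hz : IsUnit z
  · exact hz.dvd
  obtain ⟨w, rfl⟩ := hr_dvd z dvd_rfl hz0 hz
  by_cases hw : IsUnit w
  · exact hw.mul_right_dvd.mpr dvd_rfl
  obtain ⟨v, rfl⟩ := hr_dvd w (dvd_mul_left w r) (right_ne_zero_of_mul hz0) hw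
  exact absurd ⟨v, by rw [sq, mul_assoc]⟩ hsq

theorem Nat.mul_eq_self_or_eq_two_of_two_pow_le {m t : ℕ} (hm : 0 < m)
    (h : 2 ^ (m * t - m) ≤ t) : m * t = m ∨ m * t = 2 := by
  rcases t with _ | _ | t
  · simp at h
  · simp
  · have hexp : m * (t + 2) - m = m * (t + 1) := by rw [Nat.mul_succ, Nat.add_sub_cancel]
    rw [hexp] at h
    have hmono : 2 ^ (t + 1) ≤ 2 ^ (m * (t + 1)) :=
      Nat.pow_le_pow_right two_pos (Nat.le_mul_of_pos_left _ hm)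
    have ht : t < 2 ^ t := Nat.lt_two_pow_self
    have ht0 : t = 0 := by rw [pow_succ] at hmono; omega
    subst ht0
    have hm' : m < 2 ^ m := Nat.lt_two_pow_self
    simp only [zero_add, mul_one] at h
    omega

namespace Pell.Solution₁

variable {d : ℤ}

theorem isCoprime_x_y (a : Solution₁ d) : IsCoprime a.x a.y :=
  ⟨a.x, -d * a.y, by linear_combination a.prop⟩

theorem y_pow_add (a : Solution₁ d) (m n : ℕ) :
    (a ^ (m + n)).y = (a ^ m).x * (a ^ n).y + (a ^ m).y * (a ^ n).x := by
  rw [pow_add, y_mul]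

/-- The binomial expansion of `(X + Y √d) ^ t` modulo `Y ^ 2` and `Y ^ 3`. -/
theorem sq_dvd_x_pow_mul_sub_and_cube_dvd_y_pow_mul_sub (a : Solution₁ d) (m t : ℕ) :
    (a ^ m).y ^ 2 ∣ (a ^ (m * t)).x - (a ^ m).x ^ t ∧
      (a ^ m).y ^ 3 ∣ (a ^ (m * t)).y - t * (a ^ m).x ^ (t - 1) * (a ^ m).y := by
  set X := (a ^ m).x
  set Y := (a ^ m).y
  induction t with
  | zero => simp
  | succ t ih =>
    obtain ⟨⟨c, hc⟩, ⟨c', hc'⟩⟩ := ih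
    have hpred : (t : ℤ) * X ^ (t - 1) * X = t * X ^ t := by
      cases t with
      | zero => simp
      | succ s => rw [Nat.add_sub_cancel, pow_succ]; ring
    rw [Nat.mul_succ, pow_add, x_mul, y_mul, Nat.add_sub_cancel]
    refine ⟨⟨c * X + d * t * X ^ (t - 1) + d * c' * Y ^ 2, ?_⟩, ⟨c' * X + c, ?_⟩⟩
    · linear_combination X * hc + d * Y * hc'
    · push_cast
      linear_combination Y * hc + X * hc' + Y * hpred

theorem y_pow_dvd_y_pow_mul (a : Solution₁ d) (m t : ℕ) : (a ^ m).y ∣ (a ^ (m * t)).y := by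
  obtain ⟨-, c, hc⟩ := sq_dvd_x_pow_mul_sub_and_cube_dvd_y_pow_mul_sub a m t
  exact ⟨t * (a ^ m).x ^ (t - 1) + c * (a ^ m).y ^ 2, by linear_combination hc⟩

theorem dvd_y_pow_mod {a : Solution₁ d} {q : ℤ} {m n : ℕ} (hm : q ∣ (a ^ m).y)
    (hn : q ∣ (a ^ n).y) : q ∣ (a ^ (n % m)).y := by
  set k := m * (n / m)
  have hk : q ∣ (a ^ k).y := hm.trans (y_pow_dvd_y_pow_mul a m _)
  have hcop : IsCoprime q (a ^ k).x := ((isCoprime_x_y _).of_isCoprime_of_dvd_right hk).symm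
  have hsum : q ∣ (a ^ k).x * (a ^ (n % m)).y + (a ^ k).y * (a ^ (n % m)).x := by
    rwa [← y_pow_add, Nat.div_add_mod]
  exact hcop.dvd_of_dvd_mul_left ((dvd_add_left (dvd_mul_of_dvd_left hk _)).mp hsum)

theorem dvd_y_pow_gcd {a : Solution₁ d} {q : ℤ} {m n : ℕ} (hm : q ∣ (a ^ m).y)
    (hn : q ∣ (a ^ n).y) : q ∣ (a ^ Nat.gcd m n).y := by
  induction m, n using Nat.gcd.induction with
  | H0 n => simpa using hn
  | H1 m n _ ih => rw [Nat.gcd_rec]; exact ih (dvd_y_pow_mod hm hn) hm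

theorem y_pow_mul_dvd_of_prime {a : Solution₁ d} {m r : ℕ} (hr : r.Prime)
    (h : ∀ q : ℤ, Prime q → q ∣ (a ^ (m * r)).y → q ∣ (a ^ m).y) :
    (a ^ (m * r)).y ∣ r * (a ^ m).y := by
  set X := (a ^ m).x
  set Y := (a ^ m).y
  have hr' : Prime (r : ℤ) := Nat.prime_iff_prime_int.mp hr
  have hcop : ∀ q : ℤ, Prime q → q ∣ Y → ¬q ∣ X ^ (r - 1) := fun q hq hqY hqX =>
    hq.not_isUnit ((isCoprime_x_y _).isUnit_of_dvd' (hq.dvd_of_dvd_pow hqX) hqY)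
  obtain ⟨-, c, hc⟩ := sq_dvd_x_pow_mul_sub_and_cube_dvd_y_pow_mul_sub a m r
  set Z := r * X ^ (r - 1) + c * Y ^ 2
  have hyZ : (a ^ (m * r)).y = Y * Z := by linear_combination hc
  suffices hZ : Z ∣ r by rw [hyZ, mul_comm (r : ℤ)]; exact mul_dvd_mul_left Y hZ
  refine dvd_of_forall_prime_dvd_of_not_sq_dvd hr' (fun hrZ => ?_) fun q hq hqZ => ?_
  · -- `r ∣ Z` forces `r ∣ Y`, so `r ^ 2 ∣ c Y ^ 2` and `r ∣ X ^ (r - 1)`, against coprimality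
    have hrY : (r : ℤ) ∣ Y :=
      h r hr' (hyZ ▸ ((dvd_pow_self _ two_ne_zero).trans hrZ).mul_left Y)
    refine hcop r hr' hrY ((mul_dvd_mul_iff_left hr'.ne_zero).mp ?_)
    rw [← sq]
    exact (dvd_add_left (dvd_mul_of_dvd_right (pow_dvd_pow_of_dvd hrY 2) c)).mp hrZ
  · have hqY : q ∣ Y := h q hq (hyZ ▸ hqZ.mul_left Y)
    have hqr : q ∣ r * X ^ (r - 1) :=
      (dvd_add_left (dvd_mul_of_dvd_right (hqY.pow two_ne_zero) c)).mp hqZ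
    exact (hq.dvd_or_dvd hqr).resolve_right (hcop q hq hqY)

theorem y_pow_mul_dvd {a : Solution₁ d} {m t : ℕ}
    (h : ∀ q : ℤ, Prime q → q ∣ (a ^ (m * t)).y → q ∣ (a ^ m).y) :
    (a ^ (m * t)).y ∣ t * (a ^ m).y := by
  induction t using Nat.recOnMul generalizing m with
  | zero => simp
  | one => simp
  | prime r hr => exact y_pow_mul_dvd_of_prime hr h
  | mul s t ihs iht =>
    rw [← mul_assoc] at h ⊢
    have hs := ihs fun q hq hqy => h q hq (hqy.trans (y_pow_dvd_y_pow_mul a _ t))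
    have ht := iht fun q hq hqy => (h q hq hqy).trans (y_pow_dvd_y_pow_mul a m s)
    calc (a ^ (m * s * t)).y ∣ t * (a ^ (m * s)).y := ht
      _ ∣ t * (s * (a ^ m).y) := mul_dvd_mul_left _ hs
      _ = ↑(s * t) * (a ^ m).y := by push_cast; ring

section Growth

variable {a : Solution₁ d} (hax : 1 < a.x) (hay : 0 < a.y)
include hax hay

theorem y_pow_pos {n : ℕ} (hn : 0 < n) : 0 < (a ^ n).y := by
  obtain ⟨k, rfl⟩ := Nat.exists_eq_add_of_lt hn
  simpa using y_pow_succ_pos (by omega) hay k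

theorem y_pow_nonneg (n : ℕ) : 0 ≤ (a ^ n).y := by
  rcases n.eq_zero_or_pos with rfl | hn
  · simp
  · exact (y_pow_pos hax hay hn).le

theorem two_pow_mul_y_pow_le {m n : ℕ} (hmn : m ≤ n) : 2 ^ (n - m) * (a ^ m).y ≤ (a ^ n).y := by
  induction n, hmn using Nat.le_induction with
  | base => simp
  | succ n hmn ih =>
    have hstep : 2 * (a ^ n).y ≤ (a ^ (n + 1)).y := by
      rw [y_pow_add, pow_one]
      nlinarith [x_pow_pos (by omega : 0 < a.x) n, y_pow_nonneg hax hay n]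
    rw [Nat.sub_add_comm hmn, pow_succ]
    linarith

/-- By `y_pow_mul_dvd`, `y (n) ≤ (n / m) y (m)`, while `y` at least doubles at each step. -/
theorem eq_or_eq_two_of_forall_prime_dvd {m n : ℕ} (hm : 0 < m) (hn : 0 < n) (hmn : m ∣ n)
    (h : ∀ q : ℤ, Prime q → q ∣ (a ^ n).y → q ∣ (a ^ m).y) : n = m ∨ n = 2 := by
  obtain ⟨t, rfl⟩ := hmn
  have ht : 0 < t := Nat.pos_of_mul_pos_left hn
  have hym := y_pow_pos hax hay hm
  have hle : (a ^ (m * t)).y ≤ t * (a ^ m).y :=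
    Int.le_of_dvd (by positivity) (y_pow_mul_dvd h)
  have hgrowth := two_pow_mul_y_pow_le hax hay (Nat.le_mul_of_pos_right m ht)
  refine Nat.mul_eq_self_or_eq_two_of_two_pow_le hm ?_
  exact_mod_cast le_of_mul_le_mul_right (hgrowth.trans hle) hym

theorem eq_of_forall_prime_dvd_y_pow_iff {n n' : ℕ} (hn : 2 < n) (hn' : 2 < n')
    (h : ∀ q : ℤ, Prime q → (q ∣ (a ^ n).y ↔ q ∣ (a ^ n').y)) : n = n' := by
  have hg : 0 < Nat.gcd n n' := Nat.gcd_pos_of_pos_left n' (by omega)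
  have h₁ := eq_or_eq_two_of_forall_prime_dvd hax hay hg (by omega) (Nat.gcd_dvd_left n n')
    fun q hq hqy => dvd_y_pow_gcd hqy ((h q hq).mp hqy)
  have h₂ := eq_or_eq_two_of_forall_prime_dvd hax hay hg (by omega) (Nat.gcd_dvd_right n n')
    fun q hq hqy => dvd_y_pow_gcd ((h q hq).mpr hqy) hqy
  omega

end Growth

end Pell.Solution₁

open Pell Pell.Solution₁

theorem Int.prime_dvd_natCast_iff_of_primeFactors_eq {b b' : ℕ} (hb : b ≠ 0) (hb' : b' ≠ 0)
    (h : b.primeFactors = b'.primeFactors) {q : ℤ} (hq : Prime q) :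
    q ∣ (b : ℤ) ↔ q ∣ (b' : ℤ) := by
  have hq' := Int.prime_iff_natAbs_prime.mp hq
  have hmem : ∀ {c : ℕ}, c ≠ 0 → (q ∣ (c : ℤ) ↔ q.natAbs ∈ c.primeFactors) := fun hc => by
    rw [Int.dvd_natCast, Nat.mem_primeFactors_of_ne_zero hc, and_iff_right hq']
  rw [hmem hb, hmem hb', h]

def IsPellDecomposition (p D b n : ℕ) : Prop :=
  Squarefree D ∧ p ^ 2 - 1 = D * b ^ 2 ∧
    ∃ a : Solution₁ (D : ℤ), IsFundamental a ∧ (a ^ n).x = p ∧ (a ^ n).y = b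

theorem not_isSquare_of_squarefree_of_ne_one {D : ℕ} (hD : Squarefree D) (hD1 : D ≠ 1) :
    ¬IsSquare (D : ℤ) := by
  rintro ⟨r, hr⟩
  have hr1 : r * r = 1 :=
    Int.isUnit_mul_self (Int.squarefree_natCast.mpr hD r ⟨1, by rw [hr, mul_one]⟩)
  exact hD1 (by exact_mod_cast hr.trans hr1)

theorem exists_isPellDecomposition {p : ℕ} (hp : 2 ≤ p) :
    ∃ D b n, IsPellDecomposition p D b n := by
  obtain ⟨D, b, hbD, hD⟩ := Nat.sq_mul_squarefree (p ^ 2 - 1)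
  have hpell : (p : ℤ) ^ 2 - D * b ^ 2 = 1 := by
    have : ((b ^ 2 * D : ℕ) : ℤ) = p ^ 2 - 1 := by
      rw [hbD, Nat.cast_sub (Nat.one_le_pow _ _ (by omega))]; push_cast; ring
    push_cast at this
    linear_combination -this
  have hD1 : D ≠ 1 := by
    rintro rfl
    have hp' : (2 : ℤ) ≤ p := by exact_mod_cast hp
    push_cast at hpell
    rcases le_or_gt (p : ℤ) b with hpb | hpb <;> nlinarith
  have hD0 : (0 : ℤ) < D := by exact_mod_cast Nat.pos_of_ne_zero hD.ne_zero
  obtain ⟨a, ha⟩ := IsFundamental.exists_of_not_isSquare hD0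
    (not_isSquare_of_squarefree_of_ne_one hD hD1)
  obtain ⟨n, hn⟩ := ha.eq_pow_of_nonneg (a := .mk p b hpell) (by simp; omega) (by simp)
  exact ⟨D, b, n, hD, by rw [← hbD, mul_comm], a, ha, by rw [← hn, x_mk], by rw [← hn, y_mk]⟩

/-- For `n > 2` the exponent is recorded through the primes dividing `b = y (n)`, which range over
a set of size `2 ^ π(x)` rather than an unbounded one. -/
def pellTag (D b n : ℕ) : Finset ℕ × (ℕ ⊕ Finset ℕ) :=
  (D.primeFactors, if n ≤ 2 then .inl n else .inr b.primeFactors)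

def pellTags (P : Finset ℕ) : Finset (Finset ℕ × (ℕ ⊕ Finset ℕ)) :=
  P.powerset ×ˢ ((Finset.range 3).disjSum P.powerset)

theorem card_pellTags (P : Finset ℕ) : (pellTags P).card = 2 ^ P.card * (3 + 2 ^ P.card) := by
  simp [pellTags]

namespace IsPellDecomposition

variable {p D b n : ℕ}

theorem pellTag_mem {P : Finset ℕ} (h : IsPellDecomposition p D b n)
    (hP : ∀ q, q.Prime → q ∣ p ^ 2 - 1 → q ∈ P) : pellTag D b n ∈ pellTags P := by
  have hsub : ∀ c, c ∣ p ^ 2 - 1 → c.primeFactors ⊆ P := fun c hc q hq =>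
    hP q (Nat.prime_of_mem_primeFactors hq) ((Nat.dvd_of_mem_primeFactors hq).trans hc)
  have hD : D ∣ p ^ 2 - 1 := h.2.1 ▸ dvd_mul_right D _
  have hb : b ∣ p ^ 2 - 1 := h.2.1 ▸ (dvd_pow_self b two_ne_zero).mul_left D
  simp only [pellTag, pellTags, Finset.mem_product, Finset.mem_powerset]
  refine ⟨hsub D hD, ?_⟩
  split_ifs with hn
  · simpa using Nat.lt_succ_of_le hn
  · simpa using hsub b hb

theorem eq_of_pellTag_eq {p' D' b' n' : ℕ} (h : IsPellDecomposition p D b n)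
    (h' : IsPellDecomposition p' D' b' n') (htag : pellTag D b n = pellTag D' b' n') : p = p' := by
  obtain ⟨hD, -, a, ha, hx, hy⟩ := h
  obtain ⟨hD', -, a', ha', hx', hy'⟩ := h'
  obtain ⟨hDD, hnn⟩ := Prod.mk.inj htag
  obtain rfl : D = D' := by
    rw [← Nat.prod_primeFactors_of_squarefree hD, ← Nat.prod_primeFactors_of_squarefree hD', hDD]
  obtain rfl := ha.subsingleton ha'
  suffices n = n' by subst this; exact_mod_cast hx.symm.trans hx'
  split_ifs at hnn with hn hn'
  · exact Sum.inl.inj hnn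
  have hb : b ≠ 0 := by have := y_pow_pos ha.1 ha.2.1 (n := n) (by omega); omega
  have hb' : b' ≠ 0 := by have := y_pow_pos ha.1 ha.2.1 (n := n') (by omega); omega
  refine eq_of_forall_prime_dvd_y_pow_iff ha.1 ha.2.1 (by omega) (by omega) fun q hq => ?_
  rw [hy, hy']
  exact Int.prime_dvd_natCast_iff_of_primeFactors_eq hb hb' (Sum.inr.inj hnn) hq

end IsPellDecomposition

theorem two_pow_mul_three_add_two_pow_le (k : ℕ) :
    2 ^ k * (3 + 2 ^ k) ≤ 3 * 7 ^ (1 + 2 * k) := by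
  have h2 : 2 ^ k ≤ 49 ^ k := Nat.pow_le_pow_left (by norm_num) k
  have h4 : 4 ^ k ≤ 49 ^ k := Nat.pow_le_pow_left (by norm_num) k
  calc 2 ^ k * (3 + 2 ^ k) = 3 * 2 ^ k + 4 ^ k := by rw [show 4 = 2 * 2 from rfl, mul_pow]; ring
    _ ≤ 21 * 49 ^ k := by omega
    _ = 3 * 7 ^ (1 + 2 * k) := by rw [pow_add, pow_mul]; ring

theorem stmt3 (x : ℝ) :
    {p : ℕ | p.Prime ∧ ∀ q : ℕ, q.Prime → q ∣ p ^ 2 - 1 → (q : ℝ) ≤ x}.Finite ∧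
    Nat.card {p : ℕ | p.Prime ∧ ∀ q : ℕ, q.Prime → q ∣ p ^ 2 - 1 → (q : ℝ) ≤ x} ≤
      3 * 7 ^ (1 + 2 * Nat.primeCounting ⌊x⌋₊) := by
  set S := {p : ℕ | p.Prime ∧ ∀ q : ℕ, q.Prime → q ∣ p ^ 2 - 1 → (q : ℝ) ≤ x}
  set P := Nat.primesLE ⌊x⌋₊
  have hP : ∀ p ∈ S, ∀ q, q.Prime → q ∣ p ^ 2 - 1 → q ∈ P := fun p hp q hq hqp =>
    Nat.mem_primesLE.mpr ⟨Nat.le_floor (hp.2 q hq hqp), hq⟩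
  choose! D b n hdec using fun p (hp : p ∈ S) => exists_isPellDecomposition hp.1.two_le
  have hmaps : Set.MapsTo (fun p => pellTag (D p) (b p) (n p)) S (pellTags P) :=
    fun p hp => (hdec p hp).pellTag_mem (hP p hp)
  have hinj : Set.InjOn (fun p => pellTag (D p) (b p) (n p)) S :=
    fun p hp p' hp' h => (hdec p hp).eq_of_pellTag_eq (hdec p' hp') h
  refine ⟨Set.Finite.of_injOn hmaps hinj (Finset.finite_toSet _), ?_⟩
  calc Nat.card S = S.ncard := Nat.card_coe_set_eq S
    _ ≤ (pellTags P : Set _).ncard := Set.ncard_le_ncard_of_injOn _ (fun p hp => hmaps hp) hinj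
    _ = 2 ^ P.card * (3 + 2 ^ P.card) := by rw [Set.ncard_coe_finset, card_pellTags]
    _ ≤ 3 * 7 ^ (1 + 2 * Nat.primeCounting ⌊x⌋₊) := by
      rw [Nat.primesLE_card_eq_primeCounting]; exact two_pow_mul_three_add_two_pow_le _
end

section
/- For a prime p, every prime factor of p² − 1 is at most 3 if and only if p ∈ {2, 3, 5, 7, 17}. -/
lemma mod8 (t : ℕ) : (Even t ∧ 3 ^ t % 8 = 1) ∨ (¬ Even t ∧ 3 ^ t % 8 = 3) := by
  induction t with
  | zero => left; exact ⟨Even.zero, rfl⟩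
  | succ n ih =>
    rcases ih with ⟨he, h⟩ | ⟨he, h⟩
    · right
      refine ⟨by simp [Nat.even_add_one, he], ?_⟩
      rw [pow_succ, Nat.mul_mod, h]
    · left
      refine ⟨by simp [Nat.even_add_one, he], ?_⟩
      rw [pow_succ, Nat.mul_mod, h]

lemma pow3_eq_one {t : ℕ} (h : 3 ^ t = 1) : t = 0 := by
  rcases t with _ | t
  · rfl
  · exfalso
    have : 3 ∣ 3 ^ (t + 1) := dvd_pow_self 3 (Nat.succ_ne_zero t)
    omega

lemma pow3_eq_three {t : ℕ} (h : 3 ^ t = 3) : t = 1 := by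
  have := Nat.pow_right_injective (by norm_num : 2 ≤ 3) (h.trans (pow_one 3).symm)
  exact this

lemma pow2_eq_eight {m : ℕ} (h : 2 ^ m = 8) : m = 3 := by
  have : (8 : ℕ) = 2 ^ 3 := rfl
  exact Nat.pow_right_injective (le_refl 2) (h.trans this)

lemma lemA (t m : ℕ) (h : 3 ^ t + 1 = 2 ^ m) : (t = 0 ∧ m = 1) ∨ (t = 1 ∧ m = 2) := by
  by_cases hm : 3 ≤ m
  · exfalso
    have h8 : (8 : ℕ) ∣ 2 ^ m := by
      calc (8 : ℕ) = 2 ^ 3 := rfl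
      _ ∣ 2 ^ m := pow_dvd_pow 2 hm
    obtain ⟨w, hw⟩ := h8
    rcases mod8 t with ⟨_, h1⟩ | ⟨_, h1⟩ <;> omega
  · have h1 : 1 ≤ 3 ^ t := Nat.one_le_pow _ _ (by norm_num)
    interval_cases m
    · omega
    · left
      have : 3 ^ t = 1 := by omega
      exact ⟨pow3_eq_one this, rfl⟩
    · right
      have : 3 ^ t = 3 := by omega
      exact ⟨pow3_eq_three this, rfl⟩

lemma lemB (m t : ℕ) (h : 2 ^ m + 1 = 3 ^ t) : (m = 1 ∧ t = 1) ∨ (m = 3 ∧ t = 2) := by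
  have h3dvd : t = 0 ∨ 3 ∣ 3 ^ t := by
    rcases t with _ | t
    · exact Or.inl rfl
    · exact Or.inr (dvd_pow_self 3 (Nat.succ_ne_zero t))
  by_cases hm : 3 ≤ m
  · -- 3^t ≡ 1 mod 8, so t even
    have h8 : (8 : ℕ) ∣ 2 ^ m := by
      calc (8 : ℕ) = 2 ^ 3 := rfl
      _ ∣ 2 ^ m := pow_dvd_pow 2 hm
    have heven : Even t := by
      rcases mod8 t with ⟨he, h1⟩ | ⟨he, h1⟩
      · exact he
      · exfalso; omega
    obtain ⟨c, rfl⟩ := heven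
    have hc : 1 ≤ c := by
      rcases Nat.eq_zero_or_pos c with rfl | h'
      · exfalso
        norm_num at h
      · exact h'
    -- 2^m = (3^c - 1)(3^c + 1); set y = 3^c - 1
    have h3c : 3 ≤ 3 ^ c := by
      calc (3:ℕ) = 3 ^ 1 := (pow_one 3).symm
      _ ≤ 3 ^ c := Nat.pow_le_pow_right (by norm_num) hc
    obtain ⟨y, hy⟩ : ∃ y, 3 ^ c = y + 1 := ⟨3 ^ c - 1, by omega⟩
    have hcc : 3 ^ (c + c) = (y + 1) * (y + 1) := by
      rw [← hy, ← pow_add]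
    have hm2 : 2 ^ m = y * (y + 2) := by nlinarith [hcc, h]
    have hdvd : (y + 2) ∣ 2 ^ m := ⟨y, by rw [hm2]; ring⟩
    obtain ⟨j, hj, hje⟩ := (Nat.dvd_prime_pow Nat.prime_two).mp hdvd
    have hA : 3 ^ c + 1 = 2 ^ j := by omega
    rcases lemA c j hA with ⟨hc0, _⟩ | ⟨hc1, hj2⟩
    · omega
    · right
      subst hc1
      subst hj2
      norm_num at hje
      have hy2 : y = 2 := by omega
      rw [hy2] at hm2
      norm_num at hm2
      exact ⟨pow2_eq_eight hm2, rfl⟩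
  · interval_cases m
    · exfalso
      rcases h3dvd with rfl | hd
      · norm_num at h
      · norm_num at h; omega
    · left
      have h3 : 3 ^ t = 3 := by norm_num at h; omega
      exact ⟨rfl, pow3_eq_three h3⟩
    · exfalso
      rcases h3dvd with rfl | hd
      · norm_num at h
      · norm_num at h; omega

lemma smooth (n : ℕ) (hn : n ≠ 0) (h : ∀ q : ℕ, q.Prime → q ∣ n → q ≤ 3) :
    ∃ a b : ℕ, n = 2 ^ a * 3 ^ b := by
  induction n using Nat.strong_induction_on with
  | _ n ih =>
    rcases eq_or_ne n 1 with rfl | h1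
    · exact ⟨0, 0, rfl⟩
    have hp := Nat.minFac_prime h1
    have hd := Nat.minFac_dvd n
    have hle := h _ hp hd
    have h2 := hp.two_le
    obtain ⟨m, hm⟩ := hd
    have hm0 : m ≠ 0 := by rintro rfl; simp at hm; exact hn hm
    have hmlt : m < n := by
      rcases Nat.lt_or_ge m n with h' | h'
      · exact h'
      · exfalso
        have : n.minFac * m ≥ 2 * m := Nat.mul_le_mul_right m h2
        have : n ≥ 2 * m := by omega
        omega
    have hmn : m ∣ n := Dvd.intro_left _ hm.symm
    obtain ⟨a, b, hab⟩ := ih m hmlt hm0 (fun q hq hqd => h q hq (hqd.trans hmn))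
    have : n.minFac = 2 ∨ n.minFac = 3 := by omega
    rcases this with h' | h'
    · exact ⟨a + 1, b, by rw [hm, h', hab]; ring⟩
    · exact ⟨a, b + 1, by rw [hm, h', hab]; ring⟩

theorem stmt4 (p : ℕ) (hp : p.Prime) :
    (∀ q : ℕ, q.Prime → q ∣ p ^ 2 - 1 → q ≤ 3) ↔
      p = 2 ∨ p = 3 ∨ p = 5 ∨ p = 7 ∨ p = 17 := by
  constructor
  · intro h
    by_cases hp2 : p = 2
    · exact Or.inl hp2
    by_cases hp3 : p = 3
    · exact Or.inr (Or.inl hp3)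
    -- p ≥ 5 and odd
    have h5 : 5 ≤ p := by
      have := hp.two_le
      rcases Nat.lt_or_ge p 5 with h' | h'
      · interval_cases p
        · omega
        · omega
        · exact absurd hp (by norm_num)
      · exact h'
    obtain ⟨k, rfl⟩ : ∃ k, p = k + 1 := ⟨p - 1, by omega⟩
    have hk4 : 4 ≤ k := by omega
    have key : (k + 1) ^ 2 - 1 = k * (k + 2) := by
      have : (k + 1) ^ 2 = k * (k + 2) + 1 := by ring
      omega
    have hodd : Odd (k + 1) := hp.odd_of_ne_two hp2
    have hkeven : 2 ∣ k := by
      rcases hodd with ⟨j, hj⟩; omega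
    -- smooth decompositions
    obtain ⟨s, t, hst⟩ := smooth k (by omega) (fun q hq hqd =>
      h q hq (by rw [key]; exact hqd.mul_right _))
    obtain ⟨u, v, huv⟩ := smooth (k + 2) (by omega) (fun q hq hqd =>
      h q hq (by rw [key]; exact hqd.mul_left _))
    -- s ≥ 1
    have hs1 : 1 ≤ s := by
      by_contra h'
      have : s = 0 := by omega
      rw [this, pow_zero, one_mul] at hst
      have : (2 : ℕ) ∣ 3 ^ t := hst ▸ hkeven
      have := Nat.Prime.dvd_of_dvd_pow Nat.prime_two this
      omega
    have hu1 : 1 ≤ u := by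
      by_contra h'
      have : u = 0 := by omega
      rw [this, pow_zero, one_mul] at huv
      have h2d : (2 : ℕ) ∣ k + 2 := by omega
      have : (2 : ℕ) ∣ 3 ^ v := huv ▸ h2d
      have := Nat.Prime.dvd_of_dvd_pow Nat.prime_two this
      omega
    -- not both t ≥ 1 and v ≥ 1
    have htv : t = 0 ∨ v = 0 := by
      by_contra h'
      push_neg at h'
      have h3k : (3:ℕ) ∣ k := hst ▸ (dvd_mul_of_dvd_right (dvd_pow_self 3 h'.1) _)
      have h3k2 : (3:ℕ) ∣ k + 2 := huv ▸ (dvd_mul_of_dvd_right (dvd_pow_self 3 h'.2) _)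
      omega
    -- not both s ≥ 2 and u ≥ 2
    have hsu : s = 1 ∨ u = 1 := by
      by_contra h'
      push_neg at h'
      have h4k : (4:ℕ) ∣ k := by
        rw [hst]
        exact dvd_mul_of_dvd_left (by calc (4:ℕ) = 2^2 := rfl
          _ ∣ 2 ^ s := pow_dvd_pow 2 (by omega)) _
      have h4k2 : (4:ℕ) ∣ k + 2 := by
        rw [huv]
        exact dvd_mul_of_dvd_left (by calc (4:ℕ) = 2^2 := rfl
          _ ∣ 2 ^ u := pow_dvd_pow 2 (by omega)) _
      omega
    rcases hsu with rfl | hu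
    · -- k = 2 * 3^t
      rw [pow_one] at hst
      -- v = 0
      have hv0 : v = 0 := by
        rcases htv with ht0 | hv0
        · -- t = 0 → k = 2, contradiction with k ≥ 4
          exfalso; rw [ht0, pow_zero, mul_one] at hst; omega
        · exact hv0
      rw [hv0, pow_zero, mul_one] at huv
      -- 2 * 3^t + 2 = 2^u, u ≥ 2
      obtain ⟨u', rfl⟩ : ∃ u', u = u' + 1 := ⟨u - 1, by omega⟩
      rw [pow_succ] at huv
      have hA : 3 ^ t + 1 = 2 ^ u' := by omega
      rcases lemA t u' hA with ⟨ht0, _⟩ | ⟨ht1, hu2⟩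
      · exfalso; rw [ht0, pow_zero, mul_one] at hst; omega
      · rw [ht1] at hst
        norm_num at hst
        omega
    · -- u = 1 : k + 2 = 2 * 3^v
      rw [hu, pow_one] at huv
      have ht0 : t = 0 := by
        rcases htv with ht0 | hv0
        · exact ht0
        · exfalso; rw [hv0, pow_zero, mul_one] at huv; omega
      rw [ht0, pow_zero, mul_one] at hst
      obtain ⟨s', rfl⟩ : ∃ s', s = s' + 1 := ⟨s - 1, by omega⟩
      rw [pow_succ] at hst
      have hB : 2 ^ s' + 1 = 3 ^ v := by omega
      rcases lemB s' v hB with ⟨hs1', hv1⟩ | ⟨hs3, hv2⟩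
      · rw [hs1'] at hst; norm_num at hst; omega
      · rw [hs3] at hst; norm_num at hst; omega
  · -- reverse direction
    have helper : ∀ a b N : ℕ, N = 2 ^ a * 3 ^ b →
        ∀ q : ℕ, q.Prime → q ∣ N → q ≤ 3 := by
      intro a b N hN q hq hd
      rw [hN] at hd
      rcases (Nat.Prime.dvd_mul hq).mp hd with h' | h'
      · have := Nat.Prime.dvd_of_dvd_pow hq h'
        have := Nat.le_of_dvd (by norm_num) this
        omega
      · have := Nat.Prime.dvd_of_dvd_pow hq h'
        have := Nat.le_of_dvd (by norm_num) this
        omega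
    rintro (rfl | rfl | rfl | rfl | rfl)
    · exact helper 0 1 _ (by norm_num)
    · exact helper 3 0 _ (by norm_num)
    · exact helper 3 1 _ (by norm_num)
    · exact helper 4 1 _ (by norm_num)
    · exact helper 5 2 _ (by norm_num)
end

section
/- Let k ≥ 2 be an even integer, p a prime and ε ∈ {+1, −1}. Then the function 𝔣 : ℕ → ℤ defined by 𝔣(n) = σ_{k−1}(n) + ε·p^{k/2}·σ_{k−1}(n/p) is multiplicative: 𝔣(1) = 1 and 𝔣(mn) = 𝔣(m)·𝔣(n) whenever gcd(m, n) = 1. -/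
/-- `mySigma m n = ∑_{d ∣ n} d^m`, the sum of `m`-th powers of the divisors of `n`. -/
def mySigma (m n : ℕ) : ℕ := ∑ d ∈ n.divisors, d ^ m

/-- `frak k p ε n = σ_{k-1}(n) + ε p^{k/2} σ_{k-1}(n/p)`, where the last term is `0`
if `p ∣ n`. -/
def frak (k p : ℕ) (ε : ℤ) (n : ℕ) : ℤ :=
  (mySigma (k - 1) n : ℤ) +
    ε * (p : ℤ) ^ (k / 2) * (if p ∣ n then (mySigma (k - 1) (n / p) : ℤ) else 0)

/-! With `g n = [p ∣ n] f (n / p)`, the function `𝔣` is `f + c g` for `f = σ_{k-1}`. For coprime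
`m, n` with `p ∤ n` we have `g (m n) = g m · f n` and `g n = 0`, so `𝔣 (m n) = 𝔣 m · 𝔣 n`. As `p`
is prime, two coprime numbers are never both divisible by `p`, so this case suffices. -/

namespace ArithmeticFunction

variable {R : Type*} [CommSemiring R]

def divShift (f : ArithmeticFunction R) (p : ℕ) : ArithmeticFunction R :=
  ⟨fun n => if p ∣ n then f (n / p) else 0, by simp⟩

theorem divShift_apply (f : ArithmeticFunction R) (p n : ℕ) :
    divShift f p n = if p ∣ n then f (n / p) else 0 :=
  rfl

theorem IsMultiplicative.divShift_mul_of_not_dvd {f : ArithmeticFunction R}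
    (hf : f.IsMultiplicative) {p m n : ℕ} (hp : p.Prime) (hmn : m.Coprime n) (hpn : ¬ p ∣ n) :
    divShift f p (m * n) = divShift f p m * f n := by
  by_cases hpm : p ∣ m
  · obtain ⟨q, rfl⟩ := hpm
    have hqn : q.Coprime n := hmn.coprime_dvd_left (dvd_mul_left q p)
    rw [divShift_apply, divShift_apply, if_pos (dvd_mul_of_dvd_left (dvd_mul_right p q) n),
      if_pos (dvd_mul_right p q), mul_assoc, Nat.mul_div_cancel_left _ hp.pos,
      Nat.mul_div_cancel_left _ hp.pos, hf.map_mul_of_coprime hqn]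
  · have hpmn : ¬ p ∣ m * n := fun h => (hp.dvd_mul.mp h).elim hpm hpn
    simp only [divShift_apply, if_neg hpm, if_neg hpmn, zero_mul]

def addDivShift (f : ArithmeticFunction R) (p : ℕ) (c : R) : ArithmeticFunction R :=
  ⟨fun n => f n + c * divShift f p n, by simp⟩

theorem addDivShift_apply (f : ArithmeticFunction R) (p : ℕ) (c : R) (n : ℕ) :
    addDivShift f p c n = f n + c * divShift f p n :=
  rfl

theorem IsMultiplicative.addDivShift {f : ArithmeticFunction R}
    (hf : f.IsMultiplicative) {p : ℕ} (hp : p.Prime) (c : R) :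
    (addDivShift f p c).IsMultiplicative := by
  refine ⟨by simp [addDivShift_apply, divShift_apply, hp.ne_one, hf.map_one], fun {m n} hmn => ?_⟩
  wlog hpn : ¬ p ∣ n generalizing m n
  · have hpm : ¬ p ∣ m := fun hpm =>
      hp.ne_one (Nat.eq_one_of_dvd_coprimes hmn hpm (not_not.mp hpn))
    rw [mul_comm, this hmn.symm hpm, mul_comm]
  simp only [addDivShift_apply, hf.map_mul_of_coprime hmn, hf.divShift_mul_of_not_dvd hp hmn hpn,
    divShift_apply f p n, if_neg hpn]
  ring

end ArithmeticFunction

open ArithmeticFunction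

theorem frak_apply_eq (k p : ℕ) (ε : ℤ) (n : ℕ) :
    frak k p ε n =
      addDivShift (sigma (k - 1) : ArithmeticFunction ℤ) p (ε * (p : ℤ) ^ (k / 2)) n := by
  simp only [frak, mySigma, addDivShift_apply, divShift_apply, natCoe_apply, sigma_apply]

theorem stmt5_general (k p : ℕ) (hp : p.Prime)
    (ε : ℤ) :
    frak k p ε 1 = 1 ∧
      ∀ m n : ℕ, 0 < m → 0 < n → Nat.Coprime m n →
        frak k p ε (m * n) = frak k p ε m * frak k p ε n := by
  have hmul := (isMultiplicative_sigma (k := k - 1)).natCast.addDivShift hp (ε * (p : ℤ) ^ (k / 2))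
  refine ⟨by rw [frak_apply_eq, hmul.map_one], fun m n _ _ hmn => ?_⟩
  rw [frak_apply_eq, frak_apply_eq, frak_apply_eq, hmul.map_mul_of_coprime hmn]

theorem stmt5 (k p : ℕ) (hk : 2 ≤ k) (hke : Even k) (hp : p.Prime)
    (ε : ℤ) (hε : ε = 1 ∨ ε = -1) :
    frak k p ε 1 = 1 ∧
      ∀ m n : ℕ, 0 < m → 0 < n → Nat.Coprime m n →
        frak k p ε (m * n) = frak k p ε m * frak k p ε n :=
  stmt5_general k p hp ε
end

section
/- Let k ≥ 4 be an even integer, p a prime and ε ∈ {+1, −1}. Define a(n) = σ_{k−1}(n) + ε·p^{k/2}·σ_{k−1}(n/p) for n ≥ 1, where σ_{k−1}(n/p) = 0 if p ∤ n. Then for every n ≥ 1: if p ∤ n, then a(np) = (1 + p^{k−1} + ε·p^{k/2})·a(n); and if p ∣ n, then a(np) = (1 + p^{k−1} + ε·p^{k/2})·a(n) − ε·σ_{k−1}(n/p)·p^{k/2}·(ε + p^{k/2})·(ε + p^{k/2−1}). -/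
/-!
The divisor sums satisfy the Hecke relation `σ(np) = σ(p) σ(n) - p^m σ(n/p)`, the last term
being absent when `p ∤ n`; by multiplicativity it reduces to the geometric sums `σ(p^i)`.
Substituting it into `a(np)` leaves a polynomial identity in `ε` and `p^{k/2}` which holds
because `ε² = 1` and `p^{k/2} p^{k/2-1} = p^{k-1}`.
-/

open ArithmeticFunction
open scoped ArithmeticFunction.sigma

lemma mySigma_eq_sigma (m n : ℕ) : mySigma m n = σ m n := sigma_apply.symm

namespace ArithmeticFunction

variable {p : ℕ} (m : ℕ)

theorem sigma_prime (hp : p.Prime) : σ m p = 1 + p ^ m := by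
  simpa [Finset.sum_range_succ, add_comm] using sigma_apply_prime_pow (k := m) (i := 1) hp

theorem sigma_prime_pow_add_two_add (hp : p.Prime) (b : ℕ) :
    σ m (p ^ (b + 1 + 1)) + p ^ m * σ m (p ^ b) = (1 + p ^ m) * σ m (p ^ (b + 1)) := by
  have hsucc (i : ℕ) : σ m (p ^ (i + 1)) = σ m (p ^ i) + p ^ ((i + 1) * m) := by
    rw [sigma_apply_prime_pow hp, sigma_apply_prime_pow hp, Finset.sum_range_succ _ (i + 1)]
  rw [hsucc (b + 1), hsucc b]
  ring

theorem sigma_mul_prime_of_not_dvd (hp : p.Prime) {n : ℕ} (h : ¬ p ∣ n) :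
    σ m (n * p) = (1 + p ^ m) * σ m n := by
  rw [isMultiplicative_sigma.map_mul_of_coprime ((hp.coprime_iff_not_dvd.2 h).symm),
    sigma_prime m hp, mul_comm]

theorem sigma_mul_prime_add_of_dvd (hp : p.Prime) {n : ℕ} (h : p ∣ n) :
    σ m (n * p) + p ^ m * σ m (n / p) = (1 + p ^ m) * σ m n := by
  rcases eq_or_ne n 0 with rfl | hn
  · simp
  obtain ⟨e, u, hpu, rfl⟩ := Nat.exists_eq_pow_mul_and_not_dvd hn p hp.ne_one
  obtain ⟨b, rfl⟩ := Nat.exists_eq_add_one_of_ne_zero (by rintro rfl; simp_all : e ≠ 0)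
  have hcop (j : ℕ) : Nat.Coprime (p ^ j) u := (hp.coprime_iff_not_dvd.2 hpu).pow_left j
  have hmul : p ^ (b + 1) * u * p = p ^ (b + 1 + 1) * u := by ring
  have hdiv : p ^ (b + 1) * u / p = p ^ b * u := by
    rw [pow_succ, mul_right_comm, Nat.mul_div_cancel _ hp.pos]
  simp only [hmul, hdiv, isMultiplicative_sigma.map_mul_of_coprime (hcop _)]
  rw [← mul_assoc (p ^ m), ← add_mul, sigma_prime_pow_add_two_add m hp b, mul_assoc]

end ArithmeticFunction

theorem stmt6_general (k p : ℕ) (hke : Even k) (hp : p.Prime)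
    (ε : ℤ) (hε : ε = 1 ∨ ε = -1) :
    ∀ n : ℕ, 0 < n →
      (¬ p ∣ n →
        frak k p ε (n * p) =
          (1 + (p : ℤ) ^ (k - 1) + ε * (p : ℤ) ^ (k / 2)) * frak k p ε n) ∧
      (p ∣ n →
        frak k p ε (n * p) =
          (1 + (p : ℤ) ^ (k - 1) + ε * (p : ℤ) ^ (k / 2)) * frak k p ε n
            - ε * (mySigma (k - 1) (n / p) : ℤ) * (p : ℤ) ^ (k / 2) *
              (ε + (p : ℤ) ^ (k / 2)) * (ε + (p : ℤ) ^ (k / 2 - 1))) := by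
  intro n _
  obtain ⟨s, hs⟩ := hke
  have hε2 : ε * ε = 1 := by rcases hε with rfl | rfl <;> norm_num
  -- `k / 2 + (k / 2 - 1) = k - 1` for every even `k`, including `k = 0`.
  have hexp : (p : ℤ) ^ (k / 2) * (p : ℤ) ^ (k / 2 - 1) = (p : ℤ) ^ (k - 1) := by
    rw [← pow_add]; congr 1; omega
  simp only [frak, mySigma_eq_sigma, if_pos (dvd_mul_left p n), Nat.mul_div_cancel n hp.pos]
  refine ⟨fun h => ?_, fun h => ?_⟩
  · rw [if_neg h, sigma_mul_prime_of_not_dvd _ hp h]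
    push_cast
    ring
  · have hecke := congrArg (Nat.cast : ℕ → ℤ) (sigma_mul_prime_add_of_dvd (k - 1) hp h)
    push_cast at hecke
    rw [if_pos h]
    linear_combination hecke
      + (σ (k - 1) (n / p) : ℤ) * (ε * (p : ℤ) ^ (k / 2) + ε ^ 2) * hexp
      + (σ (k - 1) (n / p) : ℤ) * ((p : ℤ) ^ (k - 1) + ε * (p : ℤ) ^ (k / 2)) * hε2

theorem stmt6 (k p : ℕ) (hk : 4 ≤ k) (hke : Even k) (hp : p.Prime)
    (ε : ℤ) (hε : ε = 1 ∨ ε = -1) :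
    ∀ n : ℕ, 0 < n →
      (¬ p ∣ n →
        frak k p ε (n * p) =
          (1 + (p : ℤ) ^ (k - 1) + ε * (p : ℤ) ^ (k / 2)) * frak k p ε n) ∧
      (p ∣ n →
        frak k p ε (n * p) =
          (1 + (p : ℤ) ^ (k - 1) + ε * (p : ℤ) ^ (k / 2)) * frak k p ε n
            - ε * (mySigma (k - 1) (n / p) : ℤ) * (p : ℤ) ^ (k / 2) *
              (ε + (p : ℤ) ^ (k / 2)) * (ε + (p : ℤ) ^ (k / 2 - 1))) :=
  stmt6_general k p hke hp ε hε
end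

section
/- Let k ≥ 4 be an even integer, p a prime, ε ∈ {+1, −1}, and ℓ a prime such that ℓ divides (ε + p^{k/2})·(ε + p^{k/2−1}). Define a(n) = σ_{k−1}(n) + ε·p^{k/2}·σ_{k−1}(n/p) for n ≥ 1, where σ_{k−1}(n/p) = 0 if p ∤ n. Then for every n ≥ 1, a(np) ≡ (1 + p^{k−1} + ε·p^{k/2})·a(n) (mod ℓ). -/
open Finset

theorem Nat.filter_not_dvd_divisors_mul_prime {p : ℕ} (hp : p.Prime) (n : ℕ) :
    {d ∈ (n * p).divisors | ¬p ∣ d} = {d ∈ n.divisors | ¬p ∣ d} := by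
  ext d
  simp only [mem_filter, Nat.mem_divisors]
  constructor
  · rintro ⟨⟨hd, hn⟩, hpd⟩
    exact ⟨⟨(hp.coprime_iff_not_dvd.mpr hpd).symm.dvd_of_dvd_mul_right hd, left_ne_zero_of_mul hn⟩,
      hpd⟩
  · rintro ⟨⟨hd, hn⟩, hpd⟩
    exact ⟨⟨hd.mul_right p, mul_ne_zero hn hp.ne_zero⟩, hpd⟩

theorem Nat.sum_divisors_filter_dvd {M : Type*} [AddCommMonoid M] (f : ℕ → M) {p N : ℕ}
    (hp : p ≠ 0) (hpN : p ∣ N) :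
    ∑ d ∈ N.divisors with p ∣ d, f d = ∑ e ∈ (N / p).divisors, f (p * e) := by
  obtain ⟨c, rfl⟩ := hpN
  rw [Nat.mul_div_cancel_left _ (Nat.pos_of_ne_zero hp)]
  refine sum_nbij' (· / p) (p * ·) ?_ ?_ ?_ ?_ ?_
  · intro x hx
    simp only [mem_filter, Nat.mem_divisors] at hx
    obtain ⟨⟨hdc, hc⟩, d, rfl⟩ := hx
    rw [Nat.mul_div_cancel_left _ (Nat.pos_of_ne_zero hp), Nat.mem_divisors]
    exact ⟨Nat.dvd_of_mul_dvd_mul_left (Nat.pos_of_ne_zero hp) hdc, right_ne_zero_of_mul hc⟩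
  · intro e he
    simp only [Nat.mem_divisors] at he
    simp only [mem_filter, Nat.mem_divisors]
    exact ⟨⟨mul_dvd_mul_left p he.1, mul_ne_zero hp he.2⟩, dvd_mul_right p e⟩
  · intro d hd
    exact Nat.mul_div_cancel' (mem_filter.mp hd).2
  · intro e _
    exact Nat.mul_div_cancel_left e (Nat.pos_of_ne_zero hp)
  · intro d hd
    rw [Nat.mul_div_cancel' (mem_filter.mp hd).2]

theorem mySigma_eq_sum_not_dvd_add (m : ℕ) {p N : ℕ} (hp : p ≠ 0) (hpN : p ∣ N) :
    mySigma m N = ∑ d ∈ N.divisors with ¬p ∣ d, d ^ m + p ^ m * mySigma m (N / p) := by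
  rw [mySigma, ← sum_filter_not_add_sum_filter _ (p ∣ ·), Nat.sum_divisors_filter_dvd _ hp hpN,
    mySigma, mul_sum]
  simp only [mul_pow]

theorem mySigma_mul_prime_add (m : ℕ) {p : ℕ} (hp : p.Prime) (n : ℕ) :
    mySigma m (n * p) + p ^ m * (if p ∣ n then mySigma m (n / p) else 0) =
      (1 + p ^ m) * mySigma m n := by
  rw [mySigma_eq_sum_not_dvd_add m hp.ne_zero (dvd_mul_left p n), Nat.mul_div_cancel _ hp.pos,
    Nat.filter_not_dvd_divisors_mul_prime hp]
  split_ifs with hpn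
  · rw [mySigma_eq_sum_not_dvd_add m hp.ne_zero hpn]
    ring
  · have hnot_dvd : ∀ d ∈ n.divisors, ¬p ∣ d := fun d hd hpd =>
      hpn (hpd.trans (Nat.dvd_of_mem_divisors hd))
    rw [filter_true_of_mem hnot_dvd, mySigma]
    ring

theorem frak_hecke_defect {k p : ℕ} (hke : Even k) (hp : p.Prime) {ε : ℤ} (hε : ε ^ 2 = 1)
    (n : ℕ) :
    (1 + (p : ℤ) ^ (k - 1) + ε * (p : ℤ) ^ (k / 2)) * frak k p ε n - frak k p ε (n * p) =
      ε * (p : ℤ) ^ (k / 2) * (if p ∣ n then (mySigma (k - 1) (n / p) : ℤ) else 0) *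
        ((ε + (p : ℤ) ^ (k / 2)) * (ε + (p : ℤ) ^ (k / 2 - 1))) := by
  have hecke : (mySigma (k - 1) (n * p) : ℤ) +
      (p : ℤ) ^ (k - 1) * (if p ∣ n then (mySigma (k - 1) (n / p) : ℤ) else 0) =
        (1 + (p : ℤ) ^ (k - 1)) * mySigma (k - 1) n := by
    exact_mod_cast mySigma_mul_prime_add (k - 1) hp n
  have hpow : (p : ℤ) ^ (k - 1) = (p : ℤ) ^ (k / 2) * (p : ℤ) ^ (k / 2 - 1) := by
    rw [← pow_add]
    congr 1
    obtain ⟨h, rfl⟩ := hke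
    omega
  simp only [frak, dvd_mul_left p n, if_true, Nat.mul_div_cancel _ hp.pos]
  rw [hpow] at hecke ⊢
  linear_combination -hecke - (p : ℤ) ^ (k / 2) * (ε + (p : ℤ) ^ (k / 2 - 1)) *
    (if p ∣ n then (mySigma (k - 1) (n / p) : ℤ) else 0) * hε

theorem stmt7_general (k p ℓ : ℕ) (hke : Even k) (hp : p.Prime)
    (ε : ℤ) (hε : ε = 1 ∨ ε = -1)
    (hdvd : (ℓ : ℤ) ∣ (ε + (p : ℤ) ^ (k / 2)) * (ε + (p : ℤ) ^ (k / 2 - 1))) :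
    ∀ n : ℕ, 0 < n →
      frak k p ε (n * p) ≡
        (1 + (p : ℤ) ^ (k - 1) + ε * (p : ℤ) ^ (k / 2)) * frak k p ε n [ZMOD (ℓ : ℤ)] := by
  intro n _
  have hε2 : ε ^ 2 = 1 := by rcases hε with rfl | rfl <;> norm_num
  rw [Int.modEq_iff_dvd, frak_hecke_defect hke hp hε2]
  exact dvd_mul_of_dvd_right hdvd _

theorem stmt7 (k p ℓ : ℕ) (hk : 4 ≤ k) (hke : Even k) (hp : p.Prime) (hℓ : ℓ.Prime)
    (ε : ℤ) (hε : ε = 1 ∨ ε = -1)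
    (hdvd : (ℓ : ℤ) ∣ (ε + (p : ℤ) ^ (k / 2)) * (ε + (p : ℤ) ^ (k / 2 - 1))) :
    ∀ n : ℕ, 0 < n →
      frak k p ε (n * p) ≡
        (1 + (p : ℤ) ^ (k - 1) + ε * (p : ℤ) ^ (k / 2)) * frak k p ε n [ZMOD (ℓ : ℤ)] :=
  stmt7_general k p ℓ hke hp ε hε hdvd
end

section
/- Let k ≥ 4 be an even integer, p a prime, ε ∈ {+1, −1}, and ℓ ≥ 5 a prime with ε·p^{k/2} ≡ −1 (mod ℓ). Set r = gcd(ℓ−1, k−1), let g₁ be the multiplicative order of p^r modulo ℓ, and put μ_p = ℓ if g₁ = 1 and μ_p = g₁ otherwise. Define 𝔣(n) = σ_{k−1}(n) + ε·p^{k/2}·σ_{k−1}(n/p) (with σ_{k−1}(n/p) = 0 if p ∤ n), and let S₁ = {n ≥ 1 : ℓ ∤ σ_r(n)} and S₂ = {n ≥ 1 : ℓ ∤ 𝔣(n)}. Then for every real s > 1, L_{S₂}(s) = L_{S₁}(s) · (1 − p^{−μ_p s}) / (1 − p^{−(μ_p−1)s}). -/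
/-- The Dirichlet series `L_S(s) = ∑_{n ∈ S} n^{-s}` of a set `S` of natural numbers. -/
noncomputable def Lfun (S : Set ℕ) (s : ℝ) : ℝ := ∑' n : S, ((n : ℕ) : ℝ) ^ (-s)

open ArithmeticFunction
open scoped ArithmeticFunction.sigma

lemma geom_sum_eq_zero_iff_dvd {K : Type*} [Field K] (ℓ : ℕ) [CharP K ℓ] (x : K) (n : ℕ) :
    ∑ j ∈ Finset.range n, x ^ j = 0 ↔ (if orderOf x = 1 then ℓ else orderOf x) ∣ n := by
  by_cases hx : x = 1
  · simp [hx, CharP.cast_eq_zero_iff K ℓ]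
  · rw [if_neg (by rwa [orderOf_eq_one_iff]), geom_sum_eq hx,
      div_eq_zero_iff, or_iff_left (sub_ne_zero.mpr hx), sub_eq_zero, orderOf_dvd_iff_pow_eq_one]

lemma Nat.Prime.dvd_sigma_prime_pow_iff {ℓ q : ℕ} (hℓ : ℓ.Prime) (hq : q.Prime) (m a : ℕ) :
    ℓ ∣ σ m (q ^ a) ↔
      (if orderOf ((q : ZMod ℓ) ^ m) = 1 then ℓ else orderOf ((q : ZMod ℓ) ^ m)) ∣ a + 1 := by
  have : Fact ℓ.Prime := ⟨hℓ⟩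
  rw [← ZMod.natCast_eq_zero_iff, sigma_apply_prime_pow hq, ← geom_sum_eq_zero_iff_dvd ℓ]
  push_cast
  simp only [pow_mul']

lemma orderOf_pow_eq_orderOf_pow_gcd {G : Type*} [Monoid G] {x : G} {N m : ℕ} (hx : x ^ N = 1)
    (hm : m ≠ 0) : orderOf (x ^ m) = orderOf (x ^ N.gcd m) := by
  rw [orderOf_pow' x hm, orderOf_pow' x (Nat.gcd_ne_zero_right hm), ← Nat.gcd_assoc,
    Nat.gcd_eq_left (orderOf_dvd_of_pow_eq_one hx)]

lemma ZMod.orderOf_pow_eq_orderOf_pow_gcd {ℓ : ℕ} [Fact ℓ.Prime] (z : ZMod ℓ) {m : ℕ}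
    (hm : m ≠ 0) : orderOf (z ^ m) = orderOf (z ^ (ℓ - 1).gcd m) := by
  by_cases hz : z = 0
  · rw [hz, zero_pow hm, zero_pow (Nat.gcd_ne_zero_right hm)]
  · exact _root_.orderOf_pow_eq_orderOf_pow_gcd (ZMod.pow_card_sub_one_eq_one hz) hm

lemma ArithmeticFunction.IsMultiplicative.prime_dvd_iff_of_prime_pow {f g : ArithmeticFunction ℕ}
    (hf : f.IsMultiplicative) (hg : g.IsMultiplicative) {ℓ : ℕ} (hℓ : ℓ.Prime)
    (h : ∀ q a, q.Prime → (ℓ ∣ f (q ^ a) ↔ ℓ ∣ g (q ^ a))) (n : ℕ) : ℓ ∣ f n ↔ ℓ ∣ g n := by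
  induction n using Nat.recOnPosPrimePosCoprime with
  | prime_pow q a hq _ => exact h q a hq
  | zero => simp
  | one => simp [hf.map_one, hg.map_one]
  | coprime a b _ _ hab iha ihb =>
    rw [hf.map_mul_of_coprime hab, hg.map_mul_of_coprime hab, hℓ.dvd_mul, hℓ.dvd_mul, iha, ihb]

lemma Nat.Prime.dvd_sigma_iff_dvd_sigma_gcd {ℓ m : ℕ} (hℓ : ℓ.Prime) (hm : m ≠ 0) (n : ℕ) :
    ℓ ∣ σ m n ↔ ℓ ∣ σ ((ℓ - 1).gcd m) n := by
  have : Fact ℓ.Prime := ⟨hℓ⟩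
  refine isMultiplicative_sigma.prime_dvd_iff_of_prime_pow isMultiplicative_sigma hℓ
    (fun q a hq => ?_) n
  rw [hℓ.dvd_sigma_prime_pow_iff hq, hℓ.dvd_sigma_prime_pow_iff hq,
    ZMod.orderOf_pow_eq_orderOf_pow_gcd _ hm]

lemma sigma_prime_pow_succ {p : ℕ} (hp : p.Prime) (m a : ℕ) :
    σ m (p ^ (a + 1)) = σ m (p ^ a) + p ^ ((a + 1) * m) := by
  rw [sigma_apply_prime_pow hp, sigma_apply_prime_pow hp, Finset.sum_range_succ]

-- Once `ε p^{k/2} = -1`, the two terms of `𝔣(p^a m)` telescope to the top term of `σ_{k-1}(p^a)`.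
lemma frak_pow_mul_cast {R : Type*} [CommRing R] {k p : ℕ} (hp : p.Prime) {ε : ℤ}
    (hε : (ε : R) * (p : R) ^ (k / 2) = -1) {m : ℕ} (hm : ¬ p ∣ m) (a : ℕ) :
    (frak k p ε (p ^ a * m) : R) = (p : R) ^ (a * (k - 1)) * σ (k - 1) m := by
  have hcop (b : ℕ) : (p ^ b).Coprime m := (hp.coprime_iff_not_dvd.mpr hm).pow_left b
  cases a with
  | zero => simp [frak, hm, mySigma_eq_sigma]
  | succ b =>
    have hquot : p ^ (b + 1) * m / p = p ^ b * m := by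
      rw [pow_succ', mul_assoc, Nat.mul_div_cancel_left _ hp.pos]
    simp only [frak, mySigma_eq_sigma, hquot, dvd_mul_of_dvd_left (dvd_pow_self p b.succ_ne_zero),
      if_true, isMultiplicative_sigma.map_mul_of_coprime (hcop _), sigma_prime_pow_succ hp]
    push_cast
    linear_combination ((σ (k - 1) (p ^ b) : R) * σ (k - 1) m) * hε

lemma ne_zero_of_mul_pow_eq_neg_one {R : Type*} [Ring R] [Nontrivial R] {e x : R} {n : ℕ}
    (hn : n ≠ 0) (h : e * x ^ n = -1) : x ≠ 0 := by
  rintro rfl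
  rw [zero_pow hn, mul_zero, zero_eq_neg] at h
  exact one_ne_zero h

lemma int_dvd_frak_pow_mul_iff {k p ℓ : ℕ} (hk : 2 ≤ k) (hp : p.Prime) (hℓ : ℓ.Prime)
    {ε : ℤ} (hε : (ε : ZMod ℓ) * (p : ZMod ℓ) ^ (k / 2) = -1) {m : ℕ} (hm : ¬ p ∣ m) (a : ℕ) :
    (ℓ : ℤ) ∣ frak k p ε (p ^ a * m) ↔ ℓ ∣ σ ((ℓ - 1).gcd (k - 1)) m := by
  have : Fact ℓ.Prime := ⟨hℓ⟩
  have hpℓ : (p : ZMod ℓ) ≠ 0 := ne_zero_of_mul_pow_eq_neg_one (by omega) hε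
  rw [← hℓ.dvd_sigma_iff_dvd_sigma_gcd (by omega), ← ZMod.intCast_zmod_eq_zero_iff_dvd,
    frak_pow_mul_cast hp hε hm, ← ZMod.natCast_eq_zero_iff]
  simp [hpℓ]

lemma tsum_geometric_setOf_dvd_succ {q : ℝ} (hq0 : 0 ≤ q) (hq1 : q < 1) (ν : ℕ) :
    ∑' a : {a : ℕ | ν + 1 ∣ a + 1}, q ^ (a : ℕ) = q ^ ν / (1 - q ^ (ν + 1)) := by
  have hrange : {a : ℕ | ν + 1 ∣ a + 1} = Set.range (fun c => (ν + 1) * c + ν) := by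
    ext a
    refine ⟨fun ⟨d, hd⟩ => ⟨d - 1, ?_⟩, fun ⟨c, hc⟩ => ⟨c + 1, by rw [← hc]; ring⟩⟩
    obtain ⟨c, rfl⟩ : ∃ c, d = c + 1 := ⟨d - 1, by rcases d with _ | _ <;> simp_all⟩
    simp only [Nat.add_sub_cancel]
    linarith
  have hinj : Function.Injective (fun c => (ν + 1) * c + ν) := fun c c' h => by
    simpa using h
  have hterm (c : ℕ) : q ^ ((ν + 1) * c + ν) = (q ^ (ν + 1)) ^ c * q ^ ν := by
    rw [pow_add, pow_mul]
  rw [hrange, tsum_range (fun a => q ^ a) hinj, tsum_congr hterm, tsum_mul_right,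
    tsum_geometric_of_lt_one (by positivity) (pow_lt_one₀ hq0 hq1 (by omega)), div_eq_inv_mul]

lemma tsum_geometric_setOf_not_dvd_succ {q : ℝ} (hq0 : 0 ≤ q) (hq1 : q < 1) (ν : ℕ) :
    ∑' a : {a : ℕ | ¬ ν + 1 ∣ a + 1}, q ^ (a : ℕ) =
      (1 - q ^ ν) / ((1 - q) * (1 - q ^ (ν + 1))) := by
  have hgeom : Summable (fun a : ℕ => q ^ a) := summable_geometric_of_lt_one hq0 hq1
  have hsplit := Summable.tsum_add_tsum_compl (s := {a : ℕ | ν + 1 ∣ a + 1})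
    (hgeom.subtype _) (hgeom.subtype _)
  rw [tsum_geometric_of_lt_one hq0 hq1, tsum_geometric_setOf_dvd_succ hq0 hq1] at hsplit
  have h1 : 1 - q ≠ 0 := by linarith
  have h2 : 1 - q ^ (ν + 1) ≠ 0 := (sub_pos.mpr (pow_lt_one₀ hq0 hq1 (by omega))).ne'
  rw [Set.compl_ofPred] at hsplit
  rw [eq_sub_of_add_eq' hsplit]
  field_simp
  ring

lemma Lfun_image2_pow_mul {p : ℕ} (hp : p.Prime) (A : Set ℕ) {Q : Set ℕ}
    (hQ : ∀ m ∈ Q, ¬ p ∣ m) {s : ℝ} (hs : 1 < s) :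
    Lfun (Set.image2 (fun a m => p ^ a * m) A Q) s =
      (∑' a : A, ((p : ℝ) ^ (-s)) ^ (a : ℕ)) * Lfun Q s := by
  set q := (p : ℝ) ^ (-s)
  have hq0 : 0 ≤ q := by positivity
  have hq1 : q < 1 := Real.rpow_lt_one_of_one_lt_of_neg (by exact_mod_cast hp.one_lt) (by linarith)
  have hinj : Set.InjOn (fun x : ℕ × ℕ => p ^ x.1 * x.2) (A ×ˢ Q) := by
    rintro ⟨a, m⟩ ⟨-, hm⟩ ⟨a', m'⟩ ⟨-, hm'⟩ h
    have hmm : m = m' := by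
      simpa [Nat.ordCompl_pow_mul_of_not_dvd _ hp (hQ m hm),
        Nat.ordCompl_pow_mul_of_not_dvd _ hp (hQ m' hm')] using congrArg (ordCompl[p] ·) h
    subst hmm
    have hm0 : m ≠ 0 := by rintro rfl; exact hQ 0 hm (dvd_zero p)
    have haa : p ^ a = p ^ a' := Nat.eq_of_mul_eq_mul_right (Nat.pos_of_ne_zero hm0) h
    rw [Nat.pow_right_injective hp.two_le haa]
  have hterm (a m : ℕ) : ((p ^ a * m : ℕ) : ℝ) ^ (-s) = q ^ a * (m : ℝ) ^ (-s) := by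
    have hpow : ((p : ℝ) ^ a) ^ (-s) = q ^ a := by
      rw [← Real.rpow_natCast_mul (by positivity), mul_comm, Real.rpow_mul_natCast (by positivity)]
    rw [Nat.cast_mul, Nat.cast_pow, Real.mul_rpow (by positivity) (by positivity), hpow]
  have hF : Summable (fun a : A => q ^ (a : ℕ)) :=
    (summable_geometric_of_lt_one hq0 hq1).subtype _
  have hG : Summable (fun m : Q => ((m : ℕ) : ℝ) ^ (-s)) :=
    (Real.summable_nat_rpow.mpr (by linarith)).subtype _
  rw [Lfun, Lfun, ← Set.image_prod, tsum_image (fun n : ℕ => (n : ℝ) ^ (-s)) hinj,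
    ← (Equiv.Set.prod A Q).symm.tsum_eq,
    hF.tsum_mul_tsum hG (hF.mul_of_nonneg hG (fun _ => by positivity) (fun _ => by positivity))]
  exact tsum_congr fun x => hterm _ _

lemma setOf_one_le_eq_image2_pow_mul {p : ℕ} (hp : p.Prime) {P : ℕ → Prop} {A Q : Set ℕ}
    (hP : ∀ a m, ¬ p ∣ m → (P (p ^ a * m) ↔ a ∈ A ∧ m ∈ Q)) (hQ : ∀ m ∈ Q, ¬ p ∣ m) :
    {n | 1 ≤ n ∧ P n} = Set.image2 (fun a m => p ^ a * m) A Q := by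
  ext n
  constructor
  · rintro ⟨hn, hPn⟩
    rw [← Nat.ordProj_mul_ordCompl_eq_self n p] at hPn ⊢
    obtain ⟨ha, hm⟩ := (hP _ _ (Nat.not_dvd_ordCompl hp (by omega))).mp hPn
    exact ⟨_, ha, _, hm, rfl⟩
  · rintro ⟨a, ha, m, hm, rfl⟩
    have hm0 : m ≠ 0 := by rintro rfl; exact hQ 0 hm (dvd_zero p)
    exact ⟨Nat.one_le_iff_ne_zero.mpr (mul_ne_zero (pow_ne_zero _ hp.ne_zero) hm0),
      (hP a m (hQ m hm)).mpr ⟨ha, hm⟩⟩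

lemma Lfun_image2_univ_eq_mul_div {p : ℕ} (hp : p.Prime) {Q : Set ℕ} (hQ : ∀ m ∈ Q, ¬ p ∣ m)
    {ν : ℕ} (hν : ν ≠ 0) {s : ℝ} (hs : 1 < s) :
    Lfun (Set.image2 (fun a m => p ^ a * m) Set.univ Q) s =
      Lfun (Set.image2 (fun a m => p ^ a * m) {a | ¬ ν + 1 ∣ a + 1} Q) s *
        (1 - ((p : ℝ) ^ (-s)) ^ (ν + 1)) / (1 - ((p : ℝ) ^ (-s)) ^ ν) := by
  set q := (p : ℝ) ^ (-s)
  have hq0 : 0 ≤ q := by positivity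
  have hq1 : q < 1 := Real.rpow_lt_one_of_one_lt_of_neg (by exact_mod_cast hp.one_lt) (by linarith)
  rw [Lfun_image2_pow_mul hp _ hQ hs, Lfun_image2_pow_mul hp _ hQ hs, tsum_univ (fun a => q ^ a),
    tsum_geometric_of_lt_one hq0 hq1, tsum_geometric_setOf_not_dvd_succ hq0 hq1]
  have h1 : 1 - q ≠ 0 := by linarith
  have h2 : 1 - q ^ ν ≠ 0 := (sub_pos.mpr (pow_lt_one₀ hq0 hq1 hν)).ne'
  have h3 : 1 - q ^ (ν + 1) ≠ 0 := (sub_pos.mpr (pow_lt_one₀ hq0 hq1 (by omega))).ne'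
  field_simp

theorem stmt11_general (k p ℓ : ℕ) (hk : 4 ≤ k) (hp : p.Prime)
    (ε : ℤ) (hℓ : ℓ.Prime)
    (hcong : ε * (p : ℤ) ^ (k / 2) ≡ -1 [ZMOD (ℓ : ℤ)])
    (r : ℕ) (hr : r = Nat.gcd (ℓ - 1) (k - 1))
    (g₁ : ℕ) (hg₁ : g₁ = orderOf ((p : ZMod ℓ) ^ r))
    (μ : ℕ) (hμ : μ = if g₁ = 1 then ℓ else g₁)
    (S₁ S₂ : Set ℕ)
    (hS₁ : S₁ = {n : ℕ | 1 ≤ n ∧ ¬ ℓ ∣ mySigma r n})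
    (hS₂ : S₂ = {n : ℕ | 1 ≤ n ∧ ¬ (ℓ : ℤ) ∣ frak k p ε n})
    (s : ℝ) (hs : 1 < s) :
    Lfun S₂ s =
      Lfun S₁ s * (1 - (p : ℝ) ^ (-(μ : ℝ) * s)) / (1 - (p : ℝ) ^ (-((μ : ℝ) - 1) * s)) := by
  have : Fact ℓ.Prime := ⟨hℓ⟩
  have hεp : (ε : ZMod ℓ) * (p : ZMod ℓ) ^ (k / 2) = -1 := by
    exact_mod_cast (ZMod.intCast_eq_intCast_iff _ _ ℓ).mpr hcong
  have hpr : (p : ZMod ℓ) ^ r ≠ 0 := pow_ne_zero _ (ne_zero_of_mul_pow_eq_neg_one (by omega) hεp)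
  have hg₁0 : g₁ ≠ 0 :=
    hg₁ ▸ ne_zero_of_dvd_ne_zero (by have := hℓ.two_le; omega) (ZMod.orderOf_dvd_card_sub_one hpr)
  obtain ⟨ν, rfl, hν⟩ : ∃ ν, μ = ν + 1 ∧ ν ≠ 0 :=
    ⟨μ - 1, by split_ifs at hμ <;> have := hℓ.two_le <;> omega⟩
  have hpow_dvd (a : ℕ) : ℓ ∣ σ r (p ^ a) ↔ ν + 1 ∣ a + 1 := by
    rw [hℓ.dvd_sigma_prime_pow_iff hp, ← hg₁, ← hμ]
  set Q := {m : ℕ | ¬ p ∣ m ∧ ¬ ℓ ∣ σ r m}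
  have hS₂' : S₂ = Set.image2 (fun a m => p ^ a * m) Set.univ Q :=
    hS₂ ▸ setOf_one_le_eq_image2_pow_mul hp (fun a m hm => by
      simp [int_dvd_frak_pow_mul_iff (by omega) hp hℓ hεp hm, ← hr, Q, hm]) (fun m hm => hm.1)
  have hS₁' : S₁ = Set.image2 (fun a m => p ^ a * m) {a | ¬ ν + 1 ∣ a + 1} Q :=
    hS₁ ▸ setOf_one_le_eq_image2_pow_mul hp (fun a m hm => by
      simp [mySigma_eq_sigma, isMultiplicative_sigma.map_mul_of_coprime
        ((hp.coprime_iff_not_dvd.mpr hm).pow_left a), hℓ.dvd_mul, hpow_dvd, Q, hm])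
      (fun m hm => hm.1)
  have hrpow (n : ℕ) : (p : ℝ) ^ (-(n : ℝ) * s) = ((p : ℝ) ^ (-s)) ^ n := by
    rw [neg_mul, ← mul_neg, mul_comm, Real.rpow_mul_natCast (by positivity)]
  have hν1 : ((ν + 1 : ℕ) : ℝ) - 1 = (ν : ℝ) := by push_cast; ring
  rw [hS₁', hS₂', hν1, hrpow, hrpow]
  exact Lfun_image2_univ_eq_mul_div hp (fun m hm => hm.1) hν hs

theorem stmt11 (k p ℓ : ℕ) (hk : 4 ≤ k) (hke : Even k) (hp : p.Prime)
    (ε : ℤ) (hε : ε = 1 ∨ ε = -1) (hℓ : ℓ.Prime) (hℓ5 : 5 ≤ ℓ)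
    (hcong : ε * (p : ℤ) ^ (k / 2) ≡ -1 [ZMOD (ℓ : ℤ)])
    (r : ℕ) (hr : r = Nat.gcd (ℓ - 1) (k - 1))
    (g₁ : ℕ) (hg₁ : g₁ = orderOf ((p : ZMod ℓ) ^ r))
    (μ : ℕ) (hμ : μ = if g₁ = 1 then ℓ else g₁)
    (S₁ S₂ : Set ℕ)
    (hS₁ : S₁ = {n : ℕ | 1 ≤ n ∧ ¬ ℓ ∣ mySigma r n})
    (hS₂ : S₂ = {n : ℕ | 1 ≤ n ∧ ¬ (ℓ : ℤ) ∣ frak k p ε n})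
    (s : ℝ) (hs : 1 < s) :
    Lfun S₂ s =
      Lfun S₁ s * (1 - (p : ℝ) ^ (-(μ : ℝ) * s)) / (1 - (p : ℝ) ^ (-((μ : ℝ) - 1) * s)) :=
  stmt11_general k p ℓ hk hp ε hℓ hcong r hr g₁ hg₁ μ hμ S₁ S₂ hS₁ hS₂ s hs
end

section
/- Let p be a prime, β ≥ 2 an integer, and a, b nonnegative integers with 2a + 3b = β. Then 1 + (30a − 63b)·B_{4β}·(1 + p^{2β})/β ≠ 0, where the expression is computed in the rational numbers. -/
/-!
Since `4 ∣ 4β`, the Bernoulli number `B_{4β}` is negative, so the expression can only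
vanish when `c = 30a - 63b` is positive, hence `c ≥ 3` as `3 ∣ c`. For `β = 2` one has
`c = 30` and `B_8 = -1/30`. For `β ≥ 3`, Euler's formula for `ζ(4β)` gives
`|B_{4β}| ≥ 2 (4β)! / (2π)^{4β}`, and with `π⁴ < 98` and `1 + p^{2β} > 4^β` the product
`c |B_{4β}| (1 + p^{2β})` exceeds `β`.
-/

open Real Nat Finset

theorem bernoulli'_six : bernoulli' 6 = 1 / 42 := by
  rw [bernoulli'_def]
  norm_num [sum_range_succ, Nat.choose, bernoulli'_eq_zero_of_odd (n := 5) (by decide)]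

theorem bernoulli_eight : bernoulli 8 = -1 / 30 := by
  rw [bernoulli_eq_bernoulli'_of_ne_one (by norm_num), bernoulli'_def]
  norm_num [sum_range_succ, Nat.choose, bernoulli'_six,
    bernoulli'_eq_zero_of_odd (n := 5) (by decide), bernoulli'_eq_zero_of_odd (n := 7) (by decide)]

/-- The first term of `ζ(2k) = ∑ 1 / n ^ (2k)` bounds the sum from below. -/
theorem factorial_le_neg_one_pow_mul_bernoulli {k : ℕ} (hk : k ≠ 0) :
    ((2 * k)! : ℝ) ≤ (-1) ^ (k + 1) * bernoulli (2 * k) * (2 ^ (2 * k - 1) * π ^ (2 * k)) := by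
  have hfirst := le_hasSum (hasSum_zeta_nat hk) 1 (fun i _ => by positivity)
  rw [Nat.cast_one, one_pow, div_one, le_div_iff₀ (by positivity)] at hfirst
  linarith

theorem factorial_le_neg_bernoulli_four_mul {β : ℕ} (hβ : β ≠ 0) :
    ((4 * β)! : ℝ) ≤ -bernoulli (4 * β) * (2 ^ (4 * β - 1) * π ^ (4 * β)) := by
  have h := factorial_le_neg_one_pow_mul_bernoulli (k := 2 * β) (by omega)
  rwa [← mul_assoc 2 2, Odd.neg_one_pow ⟨β, rfl⟩, neg_one_mul] at h

theorem bernoulli_four_mul_neg {β : ℕ} (hβ : β ≠ 0) : bernoulli (4 * β) < 0 := by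
  have h := factorial_le_neg_bernoulli_four_mul hβ
  have hfac : (0 : ℝ) < (4 * β)! := by positivity
  have hB : (0 : ℝ) < -bernoulli (4 * β) := pos_of_mul_pos_left (hfac.trans_le h) (by positivity)
  exact_mod_cast neg_pos.mp hB

theorem pi_pow_four_lt : π ^ 4 < 98 := by
  have h : π ^ 2 < 9.87 := by nlinarith [pi_pos, pi_lt_d6]
  nlinarith [pi_pos]

-- `392 = 16 · 98 / 4`: it absorbs `(2π)^{4β}` against the factor `4^β` of `1 + p^{2β}`.
theorem mul_pow_lt_factorial_four_mul {β : ℕ} (hβ : 3 ≤ β) : β * 392 ^ β < 3 * (4 * β)! := by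
  induction β, hβ using Nat.le_induction with
  | base => norm_num [Nat.factorial]
  | succ n hn ih =>
    have hgrowth : 784 * (4 * n)! ≤ (4 * (n + 1))! :=
      calc 784 * (4 * n)! ≤ (4 * n)! * (4 * n + 1) ^ 4 := by
            rw [mul_comm]; gcongr
            exact le_trans (by norm_num) (Nat.pow_le_pow_left (show 13 ≤ 4 * n + 1 by omega) 4)
        _ ≤ (4 * (n + 1))! := Nat.factorial_mul_pow_le_factorial
    calc (n + 1) * 392 ^ (n + 1) = (n + 1) * 392 * 392 ^ n := by ring
      _ ≤ 2 * n * 392 * 392 ^ n := by gcongr; omega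
      _ = 784 * (n * 392 ^ n) := by ring
      _ < 784 * (3 * (4 * n)!) := by omega
      _ ≤ 3 * (4 * (n + 1))! := by omega

theorem lt_neg_bernoulli_four_mul_mul_four_pow {β : ℕ} (hβ : 3 ≤ β) :
    (β : ℚ) < 3 * -bernoulli (4 * β) * 4 ^ β := by
  set M : ℝ := 2 ^ (4 * β - 1) * π ^ (4 * β)
  have hM : M ≤ 392 ^ β * 4 ^ β := by
    calc M ≤ 2 ^ (4 * β) * (π ^ 4) ^ β := by
          rw [← pow_mul]
          exact mul_le_mul_of_nonneg_right (pow_le_pow_right₀ (by norm_num : (1 : ℝ) ≤ 2) (by omega))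
            (by positivity)
      _ ≤ 2 ^ (4 * β) * 98 ^ β := by gcongr; exact pi_pow_four_lt.le
      _ = 392 ^ β * 4 ^ β := by rw [pow_mul, ← mul_pow, ← mul_pow]; norm_num
  have hfac : (β * 392 ^ β : ℝ) < 3 * (4 * β)! := by exact_mod_cast mul_pow_lt_factorial_four_mul hβ
  have hB := factorial_le_neg_bernoulli_four_mul (show β ≠ 0 by omega)
  have hreal : (β : ℝ) * M < (3 * -bernoulli (4 * β) * 4 ^ β) * M := by
    calc (β : ℝ) * M ≤ β * 392 ^ β * 4 ^ β := by rw [mul_assoc]; gcongr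
      _ < 3 * (4 * β)! * 4 ^ β := by gcongr
      _ ≤ 3 * (-bernoulli (4 * β) * M) * 4 ^ β := by gcongr
      _ = (3 * -bernoulli (4 * β) * 4 ^ β) * M := by ring
  exact_mod_cast lt_of_mul_lt_mul_right hreal (by positivity)

theorem four_pow_lt_one_add_pow_two_mul {K : Type*} [Field K] [LinearOrder K] [IsStrictOrderedRing K]
    {x : K} (hx : 2 ≤ x) (n : ℕ) : (4 : K) ^ n < 1 + x ^ (2 * n) :=
  calc (4 : K) ^ n = 2 ^ (2 * n) := by rw [pow_mul]; norm_num
    _ ≤ x ^ (2 * n) := by gcongr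
    _ < 1 + x ^ (2 * n) := lt_one_add _

theorem three_le_of_pos_thirty_mul_sub_sixty_three_mul {a b : ℕ} (h : (0 : ℚ) < 30 * a - 63 * b) :
    (3 : ℚ) ≤ 30 * a - 63 * b := by
  have hlt : 63 * b < 30 * a := by exact_mod_cast (show (63 * b : ℚ) < 30 * a by linarith)
  have hle : ((63 * b + 3 : ℕ) : ℚ) ≤ (30 * a : ℕ) := by
    exact_mod_cast (by omega : 63 * b + 3 ≤ 30 * a)
  push_cast at hle
  linarith

theorem lt_mul_neg_bernoulli_four_mul {β a b : ℕ} {P : ℚ} (hβ : 2 ≤ β) (hab : 2 * a + 3 * b = β)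
    (hc : (0 : ℚ) < 30 * a - 63 * b) (hP : (4 : ℚ) ^ β < P) :
    (β : ℚ) < (30 * a - 63 * b) * -bernoulli (4 * β) * P := by
  obtain rfl | hβ3 : β = 2 ∨ 3 ≤ β := by omega
  · obtain ⟨rfl, rfl⟩ : a = 1 ∧ b = 0 := by omega
    norm_num [bernoulli_eight] at hP ⊢
    linarith
  have hB := neg_pos.mpr (bernoulli_four_mul_neg (show β ≠ 0 by omega))
  have hc3 := three_le_of_pos_thirty_mul_sub_sixty_three_mul hc
  calc (β : ℚ) < 3 * -bernoulli (4 * β) * 4 ^ β := lt_neg_bernoulli_four_mul_mul_four_pow hβ3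
    _ ≤ (30 * a - 63 * b) * -bernoulli (4 * β) * P := by gcongr

theorem stmt15 (p : ℕ) (hp : p.Prime) (β : ℕ) (hβ : 2 ≤ β)
    (a b : ℕ) (hab : 2 * a + 3 * b = β) :
    (1 : ℚ) + ((30 * a : ℚ) - 63 * b) * bernoulli (4 * β) * (1 + (p : ℚ) ^ (2 * β)) / (β : ℚ)
      ≠ 0 := by
  set c : ℚ := 30 * a - 63 * b
  set P : ℚ := 1 + (p : ℚ) ^ (2 * β)
  have hβpos : (0 : ℚ) < β := by exact_mod_cast (by omega : 0 < β)
  have hB : bernoulli (4 * β) < 0 := bernoulli_four_mul_neg (by omega)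
  have hP : (4 : ℚ) ^ β < P := four_pow_lt_one_add_pow_two_mul (by exact_mod_cast hp.two_le) β
  suffices c * bernoulli (4 * β) * P ≠ -β by
    rw [add_div' _ _ _ hβpos.ne', div_ne_zero_iff]
    exact ⟨fun h => this (by linarith), hβpos.ne'⟩
  rcases le_or_gt c 0 with hc | hc
  · have : 0 ≤ c * bernoulli (4 * β) * P :=
      mul_nonneg (mul_nonneg_of_nonpos_of_nonpos hc hB.le) (by positivity)
    exact ne_of_gt (by linarith)
  · have := lt_mul_neg_bernoulli_four_mul hβ hab hc hP
    rw [mul_neg, neg_mul] at this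
    exact ne_of_lt (by linarith)
end

section
/- Let p be a prime, β ≥ 2 an integer, and a, b nonnegative integers with 2a + 3b = β. Then 1 + (240a − 504b − 24)·B_{2+4β}·(p^{1+2β} − 1)/(2·(2 + 4β)) ≠ 0, where the expression is computed in the rational numbers. -/
open Real

/-- Key factorial bound: for `k ≥ 7`, `2k·64^k + 24·(2k)! ≤ 24·(2k)!·2^k`. -/
lemma stmt16_fact_bound : ∀ k : ℕ, 7 ≤ k →
    2 * k * 64 ^ k + 24 * Nat.factorial (2 * k) ≤ 24 * Nat.factorial (2 * k) * 2 ^ k := by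
  intro k hk
  induction k, hk using Nat.le_induction with
  | base => norm_num [Nat.factorial]
  | succ k hk ih =>
    have h2 : 2 * (k + 1) = (2 * k) + 1 + 1 := by ring
    rw [h2, Nat.factorial_succ, Nat.factorial_succ, pow_succ, pow_succ]
    have hF : 1 ≤ Nat.factorial (2 * k) := Nat.one_le_iff_ne_zero.mpr (Nat.factorial_ne_zero _)
    have h2k : (2:ℕ) ≤ 2 ^ k :=
      le_trans (by norm_num) (Nat.pow_le_pow_right (by norm_num) hk)
    zify at ih ⊢
    set F : ℤ := (Nat.factorial (2 * k) : ℤ) with hFdef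
    set S : ℤ := (64:ℤ) ^ k with hSdef
    set P : ℤ := (2:ℤ) ^ k with hPdef
    have hF' : (1:ℤ) ≤ F := by rw [hFdef]; exact_mod_cast hF
    have hP' : (2:ℤ) ≤ P := by rw [hPdef]; exact_mod_cast h2k
    have hS' : (1:ℤ) ≤ S := by rw [hSdef]; exact one_le_pow₀ (by norm_num)
    have hk' : (7:ℤ) ≤ (k:ℤ) := by exact_mod_cast hk
    have hM : (240:ℤ) ≤ (2 * (k:ℤ) + 1 + 1) * (2 * (k:ℤ) + 1) := by nlinarith
    have e1 : 2 * ((k:ℤ) + 1) * (S * 64) ≤ 128 * (2 * (k:ℤ) * S) := by nlinarith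
    have e2 : 128 * (2 * (k:ℤ) * S) + 128 * (24 * F) ≤ 128 * (24 * F * P) := by linarith
    have hMF : (0:ℤ) ≤ (2 * (k:ℤ) + 1 + 1) * (2 * (k:ℤ) + 1) * F := by positivity
    have e3 : 24 * ((2 * (k:ℤ) + 1 + 1) * ((2 * (k:ℤ) + 1) * F)) ≤
        12 * ((2 * (k:ℤ) + 1 + 1) * ((2 * (k:ℤ) + 1) * F)) * P := by nlinarith
    have e4 : 3072 * F * P ≤ 36 * ((2 * (k:ℤ) + 1 + 1) * ((2 * (k:ℤ) + 1) * F)) * P := by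
      have hP0 : (0:ℤ) ≤ P := by linarith
      nlinarith [mul_nonneg (mul_nonneg (by linarith : (0:ℤ) ≤ (2 * (k:ℤ) + 1 + 1) * (2 * (k:ℤ) + 1) - 240) (by linarith : (0:ℤ) ≤ F)) hP0,
        mul_nonneg (by linarith : (0:ℤ) ≤ F) hP0]
    push_cast
    nlinarith [e1, e2, e3, e4]

/-- Positivity and lower bound for `bernoulli (2k)` with `k` odd. -/
lemma stmt16_bernoulli_lb (k : ℕ) (hk : k ≠ 0) (hkodd : Odd k) :
    ((2 * k).factorial : ℝ) / (2 ^ (2 * k - 1) * π ^ (2 * k)) ≤ ((bernoulli (2 * k) : ℚ) : ℝ) := by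
  have hS := hasSum_zeta_nat (k := k) hk
  have h1 : (1 : ℝ) ≤ (-1 : ℝ) ^ (k + 1) * 2 ^ (2 * k - 1) * π ^ (2 * k) *
      ((bernoulli (2 * k) : ℚ) : ℝ) / (Nat.factorial (2 * k) : ℝ) := by
    have h0 := le_hasSum hS 1 (fun i _ => by positivity)
    norm_num at h0
    convert h0 using 2
  have hneg : (-1 : ℝ) ^ (k + 1) = 1 := (hkodd.add_one).neg_one_pow
  rw [hneg, one_mul] at h1
  have hfac : (0 : ℝ) < (Nat.factorial (2 * k) : ℝ) := by positivity
  have hpi : (0 : ℝ) < π := Real.pi_pos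
  rw [le_div_iff₀ hfac, one_mul] at h1
  rw [div_le_iff₀ (by positivity)]
  nlinarith [h1]

theorem stmt16 (p : ℕ) (hp : p.Prime) (β : ℕ) (hβ : 2 ≤ β)
    (a b : ℕ) (hab : 2 * a + 3 * b = β) :
    (1 : ℚ) + ((240 * a : ℚ) - 504 * b - 24) * bernoulli (2 + 4 * β) *
        ((p : ℚ) ^ (1 + 2 * β) - 1) / (2 * (2 + 4 * (β : ℚ)))
      ≠ 0 := by
  have hk2 : 2 + 4 * β = 2 * (1 + 2 * β) := by ring
  set k := 1 + 2 * β with hkdef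
  rw [hk2]
  set B : ℚ := bernoulli (2 * k) with hB
  -- positivity of B
  have hkodd : Odd k := ⟨β, by omega⟩
  have hlb := stmt16_bernoulli_lb k (by omega) hkodd
  have hBpos : (0 : ℚ) < B := by
    have : (0:ℝ) < ((B : ℚ) : ℝ) := lt_of_lt_of_le (by positivity) hlb
    exact_mod_cast this
  -- p ≥ 2
  have hp2 : 2 ≤ p := hp.two_le
  have hPge : (2 : ℚ) ^ k ≤ (p : ℚ) ^ k := by
    apply pow_le_pow_left₀ (by norm_num)
    exact_mod_cast hp2
  have h2k1 : (1 : ℚ) ≤ 2 ^ k := one_le_pow₀ (by norm_num)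
  have hPpos : (1 : ℚ) ≤ (p : ℚ) ^ k := le_trans h2k1 hPge
  have hDpos : (0 : ℚ) < 2 * (2 + 4 * (β : ℚ)) := by positivity
  have hDeq : 2 * (2 + 4 * (β : ℚ)) = 4 * k := by push_cast [hkdef]; ring
  rcases le_or_gt (504 * b + 24) (240 * a) with hc | hc
  · -- coefficient nonnegative, expression ≥ 1
    have hCnn : (0 : ℚ) ≤ (240 * a : ℚ) - 504 * b - 24 := by
      have : (504 * b + 24 : ℚ) ≤ 240 * a := by exact_mod_cast hc
      linarith
    have hterm : (0 : ℚ) ≤ ((240 * a : ℚ) - 504 * b - 24) * B * ((p : ℚ) ^ k - 1) /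
        (2 * (2 + 4 * (β : ℚ))) := by
      apply div_nonneg _ (le_of_lt hDpos)
      apply mul_nonneg (mul_nonneg hCnn (le_of_lt hBpos))
      linarith
    intro h
    linarith
  · -- coefficient ≤ -24
    have hc' : 240 * a ≤ 504 * b := by omega
    have hCle : (240 * a : ℚ) - 504 * b - 24 ≤ -24 := by
      have : (240 * a : ℚ) ≤ 504 * b := by exact_mod_cast hc'
      linarith
    -- here b ≥ 1, so β ≥ 3, k ≥ 7
    have hb1 : 1 ≤ b := by omega
    have hk7 : 7 ≤ k := by omega
    -- magnitude bound: 4k < 24 * B * (2^k - 1)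
    have hmag : (4 * k : ℚ) < 24 * B * (2 ^ k - 1) := by
      have hmagR : (4 * k : ℝ) < 24 * ((B : ℚ) : ℝ) * (2 ^ k - 1) := by
        have hfb := stmt16_fact_bound k hk7
        have hfbR : (2 * k * 64 ^ k + 24 * Nat.factorial (2 * k) : ℝ) ≤
            24 * Nat.factorial (2 * k) * 2 ^ k := by exact_mod_cast hfb
        have hpi4 : π < 4 := by linarith [Real.pi_lt_d2]
        have hpik : π ^ (2 * k) < 4 ^ (2 * k) :=
          pow_lt_pow_left₀ hpi4 (le_of_lt Real.pi_pos) (by omega)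
        have hden : (0:ℝ) < 2 ^ (2 * k - 1) * π ^ (2 * k) := by positivity
        have hk' : 2 * k - 1 + 1 = 2 * k := by omega
        have h64 : (2:ℝ) ^ (2 * k - 1) * 4 ^ (2 * k) = 64 ^ k / 2 := by
          have : (2:ℝ) ^ (2 * k - 1) * 2 = 2 ^ (2 * k) := by
            rw [← pow_succ, hk']
          have h4 : (4:ℝ) ^ (2 * k) = 2 ^ (4 * k) := by
            rw [show (4:ℝ) = 2 ^ 2 by norm_num, ← pow_mul]; ring_nf
          have h64' : (64:ℝ) ^ k = 2 ^ (6 * k) := by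
            rw [show (64:ℝ) = 2 ^ 6 by norm_num, ← pow_mul]
          have h26 : (2:ℝ) ^ (2 * k) * 2 ^ (4 * k) = 2 ^ (6 * k) := by
            rw [← pow_add]; ring_nf
          have e : (2:ℝ) ^ (2 * k - 1) * 4 ^ (2 * k) * 2 = 64 ^ k := by
            calc (2:ℝ) ^ (2 * k - 1) * 4 ^ (2 * k) * 2
                = (2 ^ (2 * k - 1) * 2) * 4 ^ (2 * k) := by ring
              _ = 2 ^ (2 * k) * 2 ^ (4 * k) := by rw [this, h4]
              _ = 2 ^ (6 * k) := h26
              _ = 64 ^ k := h64'.symm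
          linarith
        -- B ≥ (2k)! / (2^(2k-1) π^(2k)), so 24 B (2^k-1) ≥ 24 (2k)! (2^k-1) / (...)
        have h2kpos : (0:ℝ) < (2:ℝ) ^ k - 1 := by
          have : (2:ℝ) ^ 1 ≤ 2 ^ k := pow_le_pow_right₀ (by norm_num) (by omega)
          simpa using by linarith [this]
        have hstep : 24 * ((2 * k).factorial : ℝ) / (2 ^ (2 * k - 1) * π ^ (2 * k)) *
            (2 ^ k - 1) ≤ 24 * ((B : ℚ) : ℝ) * (2 ^ k - 1) := by
          apply mul_le_mul_of_nonneg_right _ (le_of_lt h2kpos)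
          rw [mul_div_assoc]
          exact mul_le_mul_of_nonneg_left hlb (by norm_num)
        refine lt_of_lt_of_le ?_ hstep
        rw [div_mul_eq_mul_div, lt_div_iff₀ hden]
        -- goal: 4k * (2^(2k-1) π^(2k)) < 24 (2k)! (2^k - 1)
        have hkpos : (0:ℝ) < (k:ℝ) := by positivity
        have h1 : (4 * k : ℝ) * (2 ^ (2 * k - 1) * π ^ (2 * k)) <
            (4 * k : ℝ) * (2 ^ (2 * k - 1) * 4 ^ (2 * k)) := by
          apply mul_lt_mul_of_pos_left _ (by positivity)
          exact mul_lt_mul_of_pos_left hpik (by positivity)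
        have h2 : (4 * k : ℝ) * (2 ^ (2 * k - 1) * 4 ^ (2 * k)) = 2 * k * 64 ^ k := by
          rw [h64]; ring
        have h3 : (2 * k * 64 ^ k : ℝ) ≤ 24 * (2 * k).factorial * (2 ^ k - 1) := by
          nlinarith [hfbR]
        calc (4 * k : ℝ) * (2 ^ (2 * k - 1) * π ^ (2 * k))
            < (4 * k : ℝ) * (2 ^ (2 * k - 1) * 4 ^ (2 * k)) := h1
          _ = 2 * k * 64 ^ k := h2
          _ ≤ 24 * (2 * k).factorial * (2 ^ k - 1) := h3
          _ = 24 * ((2 * k).factorial : ℝ) * (2 ^ k - 1) := by norm_num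
      exact_mod_cast hmagR
    -- conclude expression < 0
    have hBP : (0 : ℚ) ≤ B * ((p : ℚ) ^ k - 1) := by
      apply mul_nonneg (le_of_lt hBpos); linarith
    have hX : ((240 * a : ℚ) - 504 * b - 24) * B * ((p : ℚ) ^ k - 1) < -(4 * k) := by
      have e1 : 24 * B * (2 ^ k - 1) ≤ 24 * B * ((p : ℚ) ^ k - 1) := by
        apply mul_le_mul_of_nonneg_left _ (by positivity)
        linarith
      have e2 : (4 * k : ℚ) < 24 * B * ((p : ℚ) ^ k - 1) := lt_of_lt_of_le hmag e1
      nlinarith [mul_le_mul_of_nonneg_right hCle hBP]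
    intro h
    rw [hDeq] at h
    have hk0 : (0:ℚ) < 4 * k := by
      have : (1:ℚ) ≤ (k:ℚ) := by exact_mod_cast (by omega : 1 ≤ k)
      linarith
    have := (div_lt_iff₀ hk0).mpr (by linarith [hX] :
      ((240 * a : ℚ) - 504 * b - 24) * B * ((p : ℚ) ^ k - 1) < (-1) * (4 * k))
    linarith
end

section
/- Let p be a prime and α ≥ 1 an integer. Then 1 + (240p³ − 504p²)·α·(p² + p³)·B_{10α}·(1 + p^{5α}) / (20α·(p² + p³)^α) ≠ 0, where the expression is computed in the rational numbers. -/
/-!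
Writing the fraction as `A · S · B · (1 + p^{5α}) / (20 S^α)` with `A = 240p³ − 504p²`,
`S = p² + p³` and `B = B_{10α}` (after cancelling `α`), it suffices that its absolute value exceeds `1`.
Since `A = 24p²(10p − 21)` and `10p ≠ 21`, we have `|A| ≥ 24p²`. The Euler formula for `ζ(2k)` gives
`|B_{2k}| ≥ 2 (2k)! / (2π)^{2k} ≥ 1/100` for `k ≥ 5`. Finally `S ≤ p⁴`, so the denominator is at most
`20 p^{4α}`, while the numerator is at least `(24 · 12 / 100) p² p^{5α}`, which is larger since `p^{2+α} ≥ 8`.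
-/

open Real
open scoped Nat

theorem two_mul_factorial_le_two_pi_pow_mul_abs_bernoulli {k : ℕ} (hk : k ≠ 0) :
    2 * ((2 * k)! : ℝ) ≤ (2 * π) ^ (2 * k) * |(bernoulli (2 * k) : ℝ)| := by
  have hfirst : 1 ≤ (-1 : ℝ) ^ (k + 1) * 2 ^ (2 * k - 1) * π ^ (2 * k) *
      bernoulli (2 * k) / (2 * k)! := by
    simpa using le_hasSum (hasSum_zeta_nat hk) 1 fun n _ => by positivity
  have hpow : (2 * π) ^ (2 * k) = 2 * (2 ^ (2 * k - 1) * π ^ (2 * k)) := by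
    rw [mul_pow, ← mul_assoc, ← pow_succ']
    congr 3
    omega
  rw [le_div_iff₀ (by positivity), one_mul] at hfirst
  calc 2 * ((2 * k)! : ℝ)
      ≤ 2 * |(-1 : ℝ) ^ (k + 1) * 2 ^ (2 * k - 1) * π ^ (2 * k) * bernoulli (2 * k)| := by
        gcongr; exact hfirst.trans (le_abs_self _)
    _ = (2 * π) ^ (2 * k) * |(bernoulli (2 * k) : ℝ)| := by
        rw [hpow, abs_mul, abs_mul, abs_mul, abs_pow, abs_neg, abs_one, one_pow,
          abs_of_pos (by positivity : (0 : ℝ) < 2 ^ (2 * k - 1)),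
          abs_of_pos (by positivity : (0 : ℝ) < π ^ (2 * k))]
        ring

theorem forty_pow_le_two_hundred_mul_factorial {k : ℕ} (hk : 5 ≤ k) :
    40 ^ k ≤ 200 * (2 * k)! := by
  induction k, hk using Nat.le_induction with
  | base => decide
  | succ k hk ih =>
    rw [show 2 * (k + 1) = 2 * k + 1 + 1 by ring, Nat.factorial_succ, Nat.factorial_succ, pow_succ]
    have : 40 ≤ (2 * k + 1 + 1) * (2 * k + 1) := by nlinarith
    calc 40 ^ k * 40 ≤ 200 * (2 * k)! * ((2 * k + 1 + 1) * (2 * k + 1)) := by gcongr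
      _ = _ := by ring

theorem one_div_hundred_le_abs_bernoulli {k : ℕ} (hk : 5 ≤ k) :
    (1 / 100 : ℚ) ≤ |bernoulli (2 * k)| := by
  have hB := two_mul_factorial_le_two_pi_pow_mul_abs_bernoulli (k := k) (by omega)
  have hπ : (2 * π) ^ (2 * k) ≤ 40 ^ k := by
    rw [pow_mul]
    gcongr
    nlinarith [pi_lt_d2, pi_pos]
  have hfac : (40 : ℝ) ^ k ≤ 200 * (2 * k)! := by
    exact_mod_cast forty_pow_le_two_hundred_mul_factorial hk
  have hfac_pos : (0 : ℝ) < (2 * k)! := by positivity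
  rw [← Rat.cast_le (K := ℝ), Rat.cast_abs]
  push_cast
  nlinarith [abs_nonneg ((bernoulli (2 * k) : ℚ) : ℝ)]

section OrderedField

variable {K : Type*} [Field K] [LinearOrder K] [IsStrictOrderedRing K]

theorem twenty_four_mul_sq_le_abs (n : ℤ) :
    24 * (n : K) ^ 2 ≤ |240 * (n : K) ^ 3 - 504 * (n : K) ^ 2| := by
  have hlin : (1 : K) ≤ |10 * (n : K) - 21| := by
    have : (1 : ℤ) ≤ |10 * n - 21| := Int.one_le_abs (by omega)
    exact_mod_cast this
  rw [show 240 * (n : K) ^ 3 - 504 * (n : K) ^ 2 = 24 * n ^ 2 * (10 * n - 21) by ring, abs_mul,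
    abs_of_nonneg (by positivity : (0 : K) ≤ 24 * n ^ 2)]
  exact le_mul_of_one_le_right (by positivity) hlin

theorem twenty_mul_pow_lt_abs {x a b : K} {α : ℕ} (hx : 2 ≤ x) (hα : 1 ≤ α)
    (ha : 24 * x ^ 2 ≤ |a|) (hb : 1 / 100 ≤ |b|) :
    20 * (x ^ 2 + x ^ 3) ^ α < |a * (x ^ 2 + x ^ 3) * b * (1 + x ^ (5 * α))| := by
  set y := x ^ α with hy
  have hy2 : 2 ≤ y := hx.trans (le_self_pow₀ (by linarith) (by omega))
  have hS : 12 ≤ x ^ 2 + x ^ 3 := by nlinarith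
  have hSy : (x ^ 2 + x ^ 3) ^ α ≤ y ^ 4 := by
    rw [hy, ← pow_mul, mul_comm, pow_mul]
    gcongr
    nlinarith
  have hpow : x ^ (5 * α) = y ^ 5 := by rw [hy, ← pow_mul, mul_comm]
  rw [hpow, abs_mul, abs_mul, abs_mul, abs_of_pos (by positivity : 0 < x ^ 2 + x ^ 3),
    abs_of_pos (by positivity : 0 < 1 + y ^ 5)]
  calc 20 * (x ^ 2 + x ^ 3) ^ α ≤ 20 * y ^ 4 := by gcongr
    _ < 24 * x ^ 2 * 12 * (1 / 100) * y ^ 5 := by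
        have : 8 ≤ x ^ 2 * y := by nlinarith
        nlinarith [pow_pos (by linarith : (0 : K) < y) 4]
    _ ≤ |a| * (x ^ 2 + x ^ 3) * |b| * (1 + y ^ 5) := by gcongr; linarith

theorem one_add_div_ne_zero_of_lt_abs {a d : K} (hd : 0 < d) (h : d < |a|) : 1 + a / d ≠ 0 := by
  intro h0
  have : a = -d := by field_simp at h0; linarith
  rw [this, abs_neg, abs_of_pos hd] at h
  exact lt_irrefl d h

end OrderedField

theorem stmt17 (p : ℕ) (hp : p.Prime) (α : ℕ) (hα : 1 ≤ α) :
    (1 : ℚ) + (240 * (p : ℚ) ^ 3 - 504 * (p : ℚ) ^ 2) * (α : ℚ) * ((p : ℚ) ^ 2 + (p : ℚ) ^ 3) *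
        bernoulli (10 * α) * (1 + (p : ℚ) ^ (5 * α)) /
        (20 * (α : ℚ) * ((p : ℚ) ^ 2 + (p : ℚ) ^ 3) ^ α)
      ≠ 0 := by
  have hp2 : (2 : ℚ) ≤ p := by exact_mod_cast hp.two_le
  have hα0 : (0 : ℚ) < α := by exact_mod_cast hα
  have hA : 24 * (p : ℚ) ^ 2 ≤ |240 * (p : ℚ) ^ 3 - 504 * (p : ℚ) ^ 2| := by
    exact_mod_cast twenty_four_mul_sq_le_abs (K := ℚ) p
  have hB : (1 / 100 : ℚ) ≤ |bernoulli (10 * α)| := by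
    simpa [← mul_assoc] using one_div_hundred_le_abs_bernoulli (k := 5 * α) (by omega)
  have key := twenty_mul_pow_lt_abs hp2 hα hA hB
  refine one_add_div_ne_zero_of_lt_abs (by positivity) ?_
  calc 20 * (α : ℚ) * ((p : ℚ) ^ 2 + (p : ℚ) ^ 3) ^ α
      = (α : ℚ) * (20 * ((p : ℚ) ^ 2 + (p : ℚ) ^ 3) ^ α) := by ring
    _ < (α : ℚ) * |(240 * (p : ℚ) ^ 3 - 504 * (p : ℚ) ^ 2) * ((p : ℚ) ^ 2 + (p : ℚ) ^ 3) *
        bernoulli (10 * α) * (1 + (p : ℚ) ^ (5 * α))| := by gcongr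
    _ = |(α : ℚ) * ((240 * (p : ℚ) ^ 3 - 504 * (p : ℚ) ^ 2) * ((p : ℚ) ^ 2 + (p : ℚ) ^ 3) *
        bernoulli (10 * α) * (1 + (p : ℚ) ^ (5 * α)))| := by rw [abs_mul (α : ℚ), abs_of_pos hα0]
    _ = _ := by congr 1; ring
end
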